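/- arXiv:1502.06238 — 8 statements merged into one kernel-verified Lean document; each statement's English description precedes it below -/
import Mathlib

section
/- Let e, f ∈ ℤ × ℤ with det(e,f) ≠ 0. Then the set of integer points z that can be written as z = α·e + β·f with real numbers α, β ∈ [0,1] equals exactly {(0,0), e, f, e+f} if and only if det(e,f) = ±1. -/
/-!
With `D = det e f ≠ 0`, Cramer's rule gives every integer point `z` the real coordinates
`(det z f / D, det e z / D)` with respect to `e, f`. If `D = ±1` these coordinates are integers,
so a point of the parallelogram has coordinates in `{0, 1}` and is a vertex. Conversely, if the
only lattice points of the parallelogram are its vertices, translating any integer point `z` by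
`-(⌊α⌋ e + ⌊β⌋ f)` lands in the parallelogram with coordinates `(fract α, fract β)`, so both
fractional parts vanish: `D` divides `det z f` and `det e z` for every `z`. For
`z = (1, 0), (0, 1)` this says that `D` divides every coordinate of `e` and `f`, hence `D² ∣ D`.
-/

/-- The determinant of two integer vectors in the plane. -/
def det (x y : ℤ × ℤ) : ℤ := x.1 * y.2 - x.2 * y.1

open Set

def HasCoords (e f z : ℤ × ℤ) (α β : ℝ) : Prop :=
  (z.1 : ℝ) = α * e.1 + β * f.1 ∧ (z.2 : ℝ) = α * e.2 + β * f.2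

def parallelogramPoints (e f : ℤ × ℤ) : Set (ℤ × ℤ) :=
  {z | ∃ α β : ℝ, α ∈ Icc (0 : ℝ) 1 ∧ β ∈ Icc (0 : ℝ) 1 ∧ HasCoords e f z α β}

section

variable {e f z w : ℤ × ℤ} {α β α' β' : ℝ}

namespace HasCoords

theorem det_left (hz : HasCoords e f z α β) : (det z f : ℝ) = α * det e f := by
  simp only [det]; push_cast; rw [hz.1, hz.2]; ring

theorem det_right (hz : HasCoords e f z α β) : (det e z : ℝ) = β * det e f := by
  simp only [det]; push_cast; rw [hz.1, hz.2]; ring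

theorem unique (h : det e f ≠ 0) (hz : HasCoords e f z α β) (hz' : HasCoords e f z α' β') :
    α = α' ∧ β = β' := by
  have hD : (det e f : ℝ) ≠ 0 := Int.cast_ne_zero.mpr h
  exact ⟨mul_right_cancel₀ hD (hz.det_left.symm.trans hz'.det_left),
    mul_right_cancel₀ hD (hz.det_right.symm.trans hz'.det_right)⟩

theorem eq (hz : HasCoords e f z α β) (hw : HasCoords e f w α β) : z = w := by
  ext
  · exact_mod_cast hz.1.trans hw.1.symm
  · exact_mod_cast hz.2.trans hw.2.symm

theorem sub (hz : HasCoords e f z α β) (hw : HasCoords e f w α' β') :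
    HasCoords e f (z - w) (α - α') (β - β') := by
  constructor <;>
    simp only [Prod.fst_sub, Prod.snd_sub, Int.cast_sub, hz.1, hz.2, hw.1, hw.2] <;> ring

end HasCoords

theorem hasCoords_zsmul_add_zsmul (m n : ℤ) : HasCoords e f (m • e + n • f) m n := by
  constructor <;> simp

theorem hasCoords_det_div (h : det e f ≠ 0) (z : ℤ × ℤ) :
    HasCoords e f z (det z f / det e f) (det e z / det e f) := by
  constructor <;> field_simp <;> push_cast [det] <;> ring

theorem mem_vertices_iff :
    z ∈ ({(0, 0), e, f, e + f} : Set (ℤ × ℤ)) ↔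
      ∃ a b : ℤ, (a = 0 ∨ a = 1) ∧ (b = 0 ∨ b = 1) ∧ z = a • e + b • f := by
  constructor
  · rintro (rfl | rfl | rfl | rfl)
    · exact ⟨0, 0, by simp⟩
    · exact ⟨1, 0, by simp⟩
    · exact ⟨0, 1, by simp⟩
    · exact ⟨1, 1, by simp⟩
  · rintro ⟨a, b, rfl | rfl, rfl | rfl, rfl⟩ <;> simp [Prod.mk_zero_zero]

theorem vertices_subset_parallelogramPoints :
    ({(0, 0), e, f, e + f} : Set (ℤ × ℤ)) ⊆ parallelogramPoints e f := by
  intro z hz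
  obtain ⟨a, b, ha, hb, rfl⟩ := mem_vertices_iff.mp hz
  have mem_Icc : ∀ c : ℤ, c = 0 ∨ c = 1 → (c : ℝ) ∈ Icc (0 : ℝ) 1 := by
    rintro c (rfl | rfl) <;> norm_num
  exact ⟨a, b, mem_Icc a ha, mem_Icc b hb, hasCoords_zsmul_add_zsmul a b⟩

theorem parallelogramPoints_subset_vertices (hD : det e f = 1 ∨ det e f = -1) :
    parallelogramPoints e f ⊆ {(0, 0), e, f, e + f} := by
  rintro z ⟨α, β, hα, hβ, hz⟩
  have eq_intCast : ∀ {γ : ℝ} {k : ℤ}, (k : ℝ) = γ * det e f → γ = (k * det e f : ℤ) := by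
    intro γ k hk
    rcases hD with hD | hD <;> rw [hD] at hk ⊢ <;> push_cast at hk ⊢ <;> linarith
  have zero_or_one : ∀ {k : ℤ}, (k : ℝ) ∈ Icc (0 : ℝ) 1 → k = 0 ∨ k = 1 := by
    intro k hk
    rw [mem_Icc] at hk
    have : 0 ≤ k ∧ k ≤ 1 := by exact_mod_cast hk
    omega
  obtain rfl := eq_intCast hz.det_left
  obtain rfl := eq_intCast hz.det_right
  exact mem_vertices_iff.mpr ⟨_, _, zero_or_one hα, zero_or_one hβ,
    hz.eq (hasCoords_zsmul_add_zsmul _ _)⟩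

theorem exists_mem_parallelogramPoints_hasCoords_fract (h : det e f ≠ 0) (z : ℤ × ℤ) :
    ∃ w ∈ parallelogramPoints e f, HasCoords e f w
      (Int.fract ((det z f : ℝ) / det e f)) (Int.fract ((det e z : ℝ) / det e f)) := by
  set α : ℝ := det z f / det e f
  set β : ℝ := det e z / det e f
  have hw := (hasCoords_det_div h z).sub (hasCoords_zsmul_add_zsmul (e := e) (f := f) ⌊α⌋ ⌊β⌋)
  exact ⟨_, ⟨_, _, ⟨Int.fract_nonneg α, (Int.fract_lt_one α).le⟩,
    ⟨Int.fract_nonneg β, (Int.fract_lt_one β).le⟩, hw⟩, hw⟩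

theorem dvd_det_of_parallelogramPoints_eq_vertices (h : det e f ≠ 0)
    (hP : parallelogramPoints e f = {(0, 0), e, f, e + f}) (z : ℤ × ℤ) :
    det e f ∣ det z f ∧ det e f ∣ det e z := by
  obtain ⟨w, hwP, hw⟩ := exists_mem_parallelogramPoints_hasCoords_fract h z
  rw [hP] at hwP
  obtain ⟨a, b, ha, hb, rfl⟩ := mem_vertices_iff.mp hwP
  obtain ⟨hαa, hβb⟩ := hw.unique h (hasCoords_zsmul_add_zsmul a b)
  have dvd_of_fract_eq : ∀ {k : ℤ} (c : ℤ), c = 0 ∨ c = 1 →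
      Int.fract ((k : ℝ) / det e f) = c → det e f ∣ k := by
    rintro k c (rfl | rfl) hc
    · rw [Int.cast_zero, Int.fract_eq_zero_iff] at hc
      obtain ⟨m, hm⟩ := hc
      refine ⟨m, ?_⟩
      have hD : (det e f : ℝ) ≠ 0 := Int.cast_ne_zero.mpr h
      rw [eq_div_iff hD] at hm
      exact_mod_cast hm.symm.trans (mul_comm _ _)
    · exact absurd (Int.fract_lt_one _) (by rw [hc]; norm_num)
  exact ⟨dvd_of_fract_eq a ha hαa, dvd_of_fract_eq b hb hβb⟩

theorem isUnit_det_of_forall_dvd (h : det e f ≠ 0)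
    (hdvd : ∀ z, det e f ∣ det z f ∧ det e f ∣ det e z) : IsUnit (det e f) := by
  have he₁ : det e f ∣ e.1 := by simpa [det] using (hdvd (0, 1)).2
  have he₂ : det e f ∣ e.2 := by simpa [det] using (hdvd (1, 0)).2
  have hf₁ : det e f ∣ f.1 := by simpa [det] using (hdvd (0, 1)).1
  have hf₂ : det e f ∣ f.2 := by simpa [det] using (hdvd (1, 0)).1
  have hsq : det e f * det e f ∣ det e f * 1 := by
    simpa only [det, mul_one] using dvd_sub (mul_dvd_mul he₁ hf₂) (mul_dvd_mul he₂ hf₁)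
  exact isUnit_of_dvd_one ((mul_dvd_mul_iff_left h).mp hsq)

end

/-- For a pair of integer vectors with nonzero determinant, the set of integer points in
the closed parallelogram they span consists exactly of its four vertices if and only if
the determinant is `±1`. -/
theorem lattice_points_eq_vertices_iff_unimodular (e f : ℤ × ℤ) (h : det e f ≠ 0) :
    {z : ℤ × ℤ | ∃ α β : ℝ, α ∈ Set.Icc (0 : ℝ) 1 ∧ β ∈ Set.Icc (0 : ℝ) 1 ∧
        (z.1 : ℝ) = α * e.1 + β * f.1 ∧ (z.2 : ℝ) = α * e.2 + β * f.2}
      = {(0, 0), e, f, e + f} ↔ (det e f = 1 ∨ det e f = -1) := by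
  change parallelogramPoints e f = _ ↔ _
  constructor
  · intro hP
    exact Int.isUnit_iff.mp
      (isUnit_det_of_forall_dvd h (dvd_det_of_parallelogramPoints_eq_vertices h hP))
  · intro hD
    exact (parallelogramPoints_subset_vertices hD).antisymm vertices_subset_parallelogramPoints
end

section
/- (Lemma 2, symmetry of the cone relation) Let x, y, u, v ∈ ℤ × ℤ be nonzero and pairwise non-proportional (no one is a rational multiple of another). Write u = α·x + β·y and v = γ·x + δ·y with α, β, γ, δ ∈ ℚ, and write x = α'·u + β'·v and y = γ'·u + δ'·v with α', β', γ', δ' ∈ ℚ. Then α·β·γ·δ > 0 if and only if α'·β'·γ'·δ' > 0; that is, u ~_{x,y} v holds if and only if x ~_{u,v} y holds. -/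
/-- Lemma 2 (symmetry of the cone relation): for nonzero, pairwise non-proportional
integer vectors `x, y, u, v`, writing `u, v` in the basis `x, y` and `x, y` in the basis
`u, v` over `ℚ`, one has `u ~_{x,y} v` if and only if `x ~_{u,v} y`. -/
theorem cone_relation_symm (x y u v : ℤ × ℤ)
    (hx : x ≠ 0) (hy : y ≠ 0) (hu : u ≠ 0) (hv : v ≠ 0)
    (hxy : det x y ≠ 0) (hxu : det x u ≠ 0) (hxv : det x v ≠ 0)
    (hyu : det y u ≠ 0) (hyv : det y v ≠ 0) (huv : det u v ≠ 0)
    (α β γ δ α' β' γ' δ' : ℚ)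
    (hu1 : (u.1 : ℚ) = α * x.1 + β * y.1) (hu2 : (u.2 : ℚ) = α * x.2 + β * y.2)
    (hv1 : (v.1 : ℚ) = γ * x.1 + δ * y.1) (hv2 : (v.2 : ℚ) = γ * x.2 + δ * y.2)
    (hx1 : (x.1 : ℚ) = α' * u.1 + β' * v.1) (hx2 : (x.2 : ℚ) = α' * u.2 + β' * v.2)
    (hy1 : (y.1 : ℚ) = γ' * u.1 + δ' * v.1) (hy2 : (y.2 : ℚ) = γ' * u.2 + δ' * v.2) :
    α * β * γ * δ > 0 ↔ α' * β' * γ' * δ' > 0 := by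
  have hDxy : ((det x y : ℤ) : ℚ) ≠ 0 := Int.cast_ne_zero.mpr hxy
  have hDuv : ((det u v : ℤ) : ℚ) ≠ 0 := Int.cast_ne_zero.mpr huv
  -- Cramer's rule identities
  have h1 : α * ((det x y : ℤ) : ℚ) = ((det u y : ℤ) : ℚ) := by
    simp only [det]; push_cast; linear_combination (y.1 : ℚ) * hu2 - (y.2 : ℚ) * hu1
  have h2 : β * ((det x y : ℤ) : ℚ) = ((det x u : ℤ) : ℚ) := by
    simp only [det]; push_cast; linear_combination (x.2 : ℚ) * hu1 - (x.1 : ℚ) * hu2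
  have h3 : γ * ((det x y : ℤ) : ℚ) = ((det v y : ℤ) : ℚ) := by
    simp only [det]; push_cast; linear_combination (y.1 : ℚ) * hv2 - (y.2 : ℚ) * hv1
  have h4 : δ * ((det x y : ℤ) : ℚ) = ((det x v : ℤ) : ℚ) := by
    simp only [det]; push_cast; linear_combination (x.2 : ℚ) * hv1 - (x.1 : ℚ) * hv2
  have h5 : α' * ((det u v : ℤ) : ℚ) = ((det x v : ℤ) : ℚ) := by
    simp only [det]; push_cast; linear_combination (v.1 : ℚ) * hx2 - (v.2 : ℚ) * hx1
  have h6 : β' * ((det u v : ℤ) : ℚ) = ((det u x : ℤ) : ℚ) := by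
    simp only [det]; push_cast; linear_combination (u.2 : ℚ) * hx1 - (u.1 : ℚ) * hx2
  have h7 : γ' * ((det u v : ℤ) : ℚ) = ((det y v : ℤ) : ℚ) := by
    simp only [det]; push_cast; linear_combination (v.1 : ℚ) * hy2 - (v.2 : ℚ) * hy1
  have h8 : δ' * ((det u v : ℤ) : ℚ) = ((det u y : ℤ) : ℚ) := by
    simp only [det]; push_cast; linear_combination (u.2 : ℚ) * hy1 - (u.1 : ℚ) * hy2
  have key1 : (α * β * γ * δ) * ((det x y : ℤ) : ℚ) ^ 4
      = ((det u y : ℤ) : ℚ) * ((det x u : ℤ) : ℚ) * ((det v y : ℤ) : ℚ) * ((det x v : ℤ) : ℚ) := by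
    calc (α * β * γ * δ) * ((det x y : ℤ) : ℚ) ^ 4
        = (α * ((det x y : ℤ) : ℚ)) * (β * ((det x y : ℤ) : ℚ))
          * (γ * ((det x y : ℤ) : ℚ)) * (δ * ((det x y : ℤ) : ℚ)) := by ring
      _ = _ := by rw [h1, h2, h3, h4]
  have key2 : (α' * β' * γ' * δ') * ((det u v : ℤ) : ℚ) ^ 4
      = ((det x v : ℤ) : ℚ) * ((det u x : ℤ) : ℚ) * ((det y v : ℤ) : ℚ) * ((det u y : ℤ) : ℚ) := by
    calc (α' * β' * γ' * δ') * ((det u v : ℤ) : ℚ) ^ 4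
        = (α' * ((det u v : ℤ) : ℚ)) * (β' * ((det u v : ℤ) : ℚ))
          * (γ' * ((det u v : ℤ) : ℚ)) * (δ' * ((det u v : ℤ) : ℚ)) := by ring
      _ = _ := by rw [h5, h6, h7, h8]
  have hN : ((det x v : ℤ) : ℚ) * ((det u x : ℤ) : ℚ) * ((det y v : ℤ) : ℚ) * ((det u y : ℤ) : ℚ)
      = ((det u y : ℤ) : ℚ) * ((det x u : ℤ) : ℚ) * ((det v y : ℤ) : ℚ) * ((det x v : ℤ) : ℚ) := by
    simp only [det]; push_cast; ring
  have hp1 : (0 : ℚ) < ((det x y : ℤ) : ℚ) ^ 4 := by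
    have h2 := pow_two_pos_of_ne_zero hDxy
    calc (0 : ℚ) < (((det x y : ℤ) : ℚ) ^ 2) ^ 2 := pow_pos h2 2
      _ = ((det x y : ℤ) : ℚ) ^ 4 := by ring
  have hp2 : (0 : ℚ) < ((det u v : ℤ) : ℚ) ^ 4 := by
    have h2 := pow_two_pos_of_ne_zero hDuv
    calc (0 : ℚ) < (((det u v : ℤ) : ℚ) ^ 2) ^ 2 := pow_pos h2 2
      _ = ((det u v : ℤ) : ℚ) ^ 4 := by ring
  constructor
  · intro h
    have hN1 : 0 < ((det u y : ℤ) : ℚ) * ((det x u : ℤ) : ℚ) * ((det v y : ℤ) : ℚ) * ((det x v : ℤ) : ℚ) := by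
      rw [← key1]; exact mul_pos h hp1
    nlinarith [key2, hN, hp2, hN1]
  · intro h
    have hN2 : 0 < ((det x v : ℤ) : ℚ) * ((det u x : ℤ) : ℚ) * ((det y v : ℤ) : ℚ) * ((det u y : ℤ) : ℚ) := by
      rw [← key2]; exact mul_pos h hp2
    nlinarith [key1, hN, hp1, hN2]
end

section
/- (Corollary 1.1: maximal cliques have exactly three elements) There do not exist four pairs x, y, z, w ∈ ℤ × ℤ that are pairwise distant, i.e. with |det| equal to 1 for all six pairs among them. Moreover, every distant pair extends to a triangle: if x, y are distant unimodular pairs, then x + y is unimodular and distant from both x and y. -/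
lemma det_self (x : ℤ × ℤ) : det x x = 0 := by
  unfold det; ring

lemma det_swap (x y : ℤ × ℤ) : det y x = -det x y := by
  unfold det; ring

lemma det_add_right (x y z : ℤ × ℤ) : det x (y + z) = det x y + det x z := by
  simp only [det, Prod.fst_add, Prod.snd_add]; ring

lemma det_pluecker (x y z w : ℤ × ℤ) :
    det x y * det z w - det x z * det y w + det x w * det y z = 0 := by
  unfold det; ring

theorem not_exists_four_pairwise_distant :
    ¬ ∃ x y z w : ℤ × ℤ, |det x y| = 1 ∧ |det x z| = 1 ∧ |det x w| = 1 ∧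
        |det y z| = 1 ∧ |det y w| = 1 ∧ |det z w| = 1 := by
  rintro ⟨x, y, z, w, hxy, hxz, hxw, hyz, hyw, hzw⟩
  have odd_of_abs_eq_one {d : ℤ} (h : |d| = 1) : Odd d := odd_abs.mp (h ▸ odd_one)
  have h_odd : Odd (det x y * det z w - det x z * det y w + det x w * det y z) :=
    (((odd_of_abs_eq_one hxy).mul (odd_of_abs_eq_one hzw)).sub_odd
      ((odd_of_abs_eq_one hxz).mul (odd_of_abs_eq_one hyw))).add_odd
      ((odd_of_abs_eq_one hxw).mul (odd_of_abs_eq_one hyz))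
  rw [det_pluecker] at h_odd
  exact Int.not_odd_zero h_odd

lemma gcd_eq_one_of_abs_det_eq_one {x v : ℤ × ℤ} (h : |det x v| = 1) : Int.gcd v.1 v.2 = 1 := by
  rw [← Int.isCoprime_iff_gcd_eq_one]
  have h_sq : det x v * det x v = 1 := by rw [← abs_mul_abs_self, h, one_mul]
  exact ⟨-x.2 * det x v, x.1 * det x v, by rw [← h_sq]; unfold det; ring⟩

/-- Corollary 1.1: maximal cliques of the distant relation have exactly three elements.
There are no four pairwise distant points, and every distant pair `x, y` extends to a
triangle by the unimodular pair `x + y`. -/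
theorem maximal_cliques_have_three_elements :
    (¬ ∃ x y z w : ℤ × ℤ, |det x y| = 1 ∧ |det x z| = 1 ∧ |det x w| = 1 ∧
        |det y z| = 1 ∧ |det y w| = 1 ∧ |det z w| = 1) ∧
    (∀ x y : ℤ × ℤ, Int.gcd x.1 x.2 = 1 → Int.gcd y.1 y.2 = 1 → |det x y| = 1 →
        Int.gcd (x + y).1 (x + y).2 = 1 ∧ |det x (x + y)| = 1 ∧ |det y (x + y)| = 1) := by
  refine ⟨not_exists_four_pairwise_distant, fun x y _ _ hxy => ?_⟩
  have hx : |det x (x + y)| = 1 := by rwa [det_add_right, det_self, zero_add]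
  refine ⟨gcd_eq_one_of_abs_det_eq_one hx, hx, ?_⟩
  rwa [det_add_right, det_self, add_zero, det_swap, abs_neg]
end

section
/- (Corollary 1.2 and 1.3: the two maximal cliques on an edge) Let x, y ∈ ℤ × ℤ be distant unimodular pairs. Then an element z ∈ ℤ × ℤ is distant from both x and y if and only if z ∈ {x+y, −(x+y), x−y, y−x}. Moreover det(x+y, x−y) = −2·det(x,y), so |det(x+y, x−y)| = 2 and the two points x+y and x−y are not distant from each other; hence {x, y, x+y} and {x, y, x−y} are, up to sign, the only two maximal cliques of the distant relation containing the pair {x, y}. -/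
/-- Corollary 1.2 and 1.3: for distant unimodular pairs `x, y`, a point `z` is distant
from both `x` and `y` iff `z ∈ {x+y, -(x+y), x-y, y-x}`; moreover
`det (x+y) (x-y) = -2 det x y`, so `x+y` and `x-y` are not distant from each other:
up to sign, `{x, y, x+y}` and `{x, y, x-y}` are the only two maximal cliques on the
edge `{x, y}`. -/
theorem two_maximal_cliques_on_an_edge (x y : ℤ × ℤ)
    (hx : Int.gcd x.1 x.2 = 1) (hy : Int.gcd y.1 y.2 = 1) (hxy : |det x y| = 1) :
    (∀ z : ℤ × ℤ, (|det x z| = 1 ∧ |det y z| = 1) ↔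
        (z = x + y ∨ z = -(x + y) ∨ z = x - y ∨ z = y - x)) ∧
    det (x + y) (x - y) = -2 * det x y ∧
    |det (x + y) (x - y)| = 2 := by
  have hd : det x y = 1 ∨ det x y = -1 := (abs_eq (by norm_num)).mp hxy
  have hd2 : det x y * det x y = 1 := by rcases hd with h | h <;> rw [h] <;> ring
  refine ⟨fun z => ?_, ?_, ?_⟩
  · constructor
    · rintro ⟨h1, h2⟩
      have hb : det x z = 1 ∨ det x z = -1 := (abs_eq (by norm_num)).mp h1
      have ha : det y z = 1 ∨ det y z = -1 := (abs_eq (by norm_num)).mp h2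
      have e1 : z.1 = (-(det y z) * det x y) * x.1 + (det x z * det x y) * y.1 := by
        simp only [det] at hd2 ⊢
        linear_combination -z.1 * hd2
      have e2 : z.2 = (-(det y z) * det x y) * x.2 + (det x z * det x y) * y.2 := by
        simp only [det] at hd2 ⊢
        linear_combination -z.2 * hd2
      rcases ha with ha | ha <;> rcases hb with hb | hb <;> rcases hd with h | h <;>
        rw [ha, hb, h] at e1 e2 <;>
        [skip; skip; skip; skip; skip; skip; skip; skip] <;>
        first
        | (left; ext <;> simp <;> linarith)
        | (right; left; ext <;> simp <;> linarith)
        | (right; right; left; ext <;> simp <;> linarith)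
        | (right; right; right; ext <;> simp <;> linarith)
    · rintro (rfl | rfl | rfl | rfl) <;>
        constructor <;> simp only [det, Prod.fst_add, Prod.snd_add, Prod.fst_sub,
          Prod.snd_sub, Prod.fst_neg, Prod.snd_neg] <;>
        rcases hd with h | h <;> simp only [det] at h <;>
        rw [abs_eq (by norm_num : (0:ℤ) ≤ 1)] <;> [skip;skip;skip;skip;skip;skip;skip;skip;skip;skip;skip;skip;skip;skip;skip;skip] <;>
        first
        | (left; linarith [h])
        | (right; linarith [h])
        | (left; linear_combination h)
        | (right; linear_combination -h)
        | (left; linear_combination -h)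
        | (right; linear_combination h)
  · simp only [det, Prod.fst_add, Prod.snd_add, Prod.fst_sub, Prod.snd_sub]
    ring
  · have : det (x + y) (x - y) = -2 * det x y := by
      simp only [det, Prod.fst_add, Prod.snd_add, Prod.fst_sub, Prod.snd_sub]; ring
    rw [this, abs_mul, hxy]
    norm_num
end

section
/- (Connectedness of the distant graph, Theorem 1) The simple graph G whose vertices are the unimodular pairs x ∈ ℤ × ℤ, with x and y adjacent if and only if |det(x,y)| = 1, is preconnected: any two unimodular pairs are joined by a path in G. -/
/-- The distant graph of the projective line over `ℤ`, on the level of unimodular pairs: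
vertices are the unimodular pairs, and two of them are adjacent iff the absolute value of
their determinant is `1`. -/
def distGraph : SimpleGraph {x : ℤ × ℤ // Int.gcd x.1 x.2 = 1} where
  Adj a b := |det a.1 b.1| = 1
  symm := by
    constructor
    intro a b h
    try dsimp only at h ⊢
    have : det b.1 a.1 = -(det a.1 b.1) := by simp only [det]; ring
    rw [this, abs_neg]
    exact h
  loopless := by
    constructor
    intro a h
    try dsimp only at h ⊢
    have : det a.1 a.1 = 0 := by simp only [det]; ring
    rw [this] at h
    simp at h

/-!
Every vertex `(a, b)` with `b ≠ 0` has a neighbour whose second coordinate is smaller in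
absolute value: if `a u + b v = 1`, the vector `(-(v + a q), r)` with `u = b q + r` the
Euclidean division has determinant `1` with `(a, b)` and `|r| < |b|`. Descending on `|b|`
ends at `(±1, 0)`, which is adjacent to `(0, 1)`; so every vertex reaches `(0, 1)`.
-/

lemma isCoprime_of_det_eq_one {x y : ℤ × ℤ} (h : det x y = 1) : IsCoprime y.1 y.2 :=
  ⟨-x.2, x.1, by simp only [det] at h; linarith⟩

lemma exists_det_eq_one_natAbs_snd_lt {a b : ℤ} (hab : IsCoprime a b) (hb : b ≠ 0) :
    ∃ y : ℤ × ℤ, det (a, b) y = 1 ∧ y.2.natAbs < b.natAbs := by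
  obtain ⟨u, v, huv⟩ := hab
  refine ⟨(-(v + a * (u / b)), u % b), ?_, ?_⟩
  · simp only [det, Int.emod_def]
    linear_combination huv
  · have hlt := Int.emod_lt_abs u hb
    have hnonneg := Int.emod_nonneg u hb
    rw [Int.abs_eq_natAbs] at hlt
    dsimp only
    omega

namespace distGraph

/-- The point `0 = [0 : 1]` of `P(ℤ)`. -/
def zero : {x : ℤ × ℤ // Int.gcd x.1 x.2 = 1} := ⟨(0, 1), rfl⟩

lemma adj_of_det_eq_one {x y : {x : ℤ × ℤ // Int.gcd x.1 x.2 = 1}} (h : det x.1 y.1 = 1) :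
    distGraph.Adj x y := by
  show |det x.1 y.1| = 1
  rw [h, abs_one]

lemma adj_zero_of_snd_eq_zero {x : {x : ℤ × ℤ // Int.gcd x.1 x.2 = 1}} (hb : x.1.2 = 0) :
    distGraph.Adj x zero := by
  obtain ⟨⟨a, b⟩, hab⟩ := x
  simp only at hb
  subst hb
  show |a * 1 - 0 * 0| = 1
  rw [mul_one, zero_mul, sub_zero, Int.abs_eq_natAbs, ← Int.gcd_zero_right, hab, Nat.cast_one]

lemma reachable_zero (x : {x : ℤ × ℤ // Int.gcd x.1 x.2 = 1}) : distGraph.Reachable x zero := by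
  induction h : x.1.2.natAbs using Nat.strong_induction_on generalizing x with
  | _ n ih =>
    by_cases hb : x.1.2 = 0
    · exact (adj_zero_of_snd_eq_zero hb).reachable
    obtain ⟨y, hdet, hlt⟩ :=
      exists_det_eq_one_natAbs_snd_lt (Int.isCoprime_iff_gcd_eq_one.mpr x.2) hb
    let y' : {x : ℤ × ℤ // Int.gcd x.1 x.2 = 1} :=
      ⟨y, Int.isCoprime_iff_gcd_eq_one.mp (isCoprime_of_det_eq_one hdet)⟩
    exact (adj_of_det_eq_one (y := y') hdet).reachable.trans (ih _ (h ▸ hlt) y' rfl)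

end distGraph

/-- The distant graph of `P(ℤ)` is connected: any two unimodular pairs are joined by
a path. -/
theorem distGraph_preconnected : distGraph.Preconnected := fun x y =>
  (distGraph.reachable_zero x).trans (distGraph.reachable_zero y).symm
end

section
/- (Theorem 1.3) Let x, y ∈ ℤ × ℤ be unimodular pairs with |det(x,y)| ≥ 2, and let d₊(x,y) and d₋(x,y) denote the minimal lengths of consistent paths of sign +1 and of sign −1, respectively, from x to y. Then there is, up to replacing vertices by their negatives, a unique shortest consistent path from x to y if and only if d₊(x,y) ≠ d₋(x,y). -/
/-- A path of length `n` from `x` to `y` in the distant graph of `P(ℤ)`, given by its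
sequence of vertices `z 0 = x, …, z n = y`: all vertices are unimodular pairs,
consecutive vertices are distant (`|det| = 1`), and distinct indices give distinct
projective points (`z i ≠ ± z j`). -/
def IsPath (x y : ℤ × ℤ) (n : ℕ) (z : ℕ → ℤ × ℤ) : Prop :=
  z 0 = x ∧ z n = y ∧
  (∀ i, i ≤ n → Int.gcd (z i).1 (z i).2 = 1) ∧
  (∀ i, i < n → |det (z i) (z (i + 1))| = 1) ∧
  (∀ i j, i ≤ n → j ≤ n → i ≠ j → z i ≠ z j ∧ z i ≠ -z j)

/-- A consistent path of sign `ε` from `x` to `y`: a path all of whose intermediate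
vertices `z i = α • x + β • y` (coefficients over `ℚ`) satisfy `ε * α * β > 0`, i.e. they
all lie in the same pair of opposite open cones determined by `x` and `y`. -/
def IsConsistentPath (x y : ℤ × ℤ) (ε : ℚ) (n : ℕ) (z : ℕ → ℤ × ℤ) : Prop :=
  IsPath x y n z ∧
  ∀ i, 0 < i → i < n → ∃ α β : ℚ,
    ((z i).1 : ℚ) = α * x.1 + β * y.1 ∧ ((z i).2 : ℚ) = α * x.2 + β * y.2 ∧
    ε * (α * β) > 0


namespace UC

lemma det_anti (a b : ℤ × ℤ) : det a b = - det b a := by simp only [det]; ring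

lemma det_self (a : ℤ × ℤ) : det a a = 0 := by simp only [det]; ring

lemma det_neg_right (a b : ℤ × ℤ) : det a (-b) = - det a b := by
  simp only [det, Prod.fst_neg, Prod.snd_neg]; ring

lemma det_neg_left (a b : ℤ × ℤ) : det (-a) b = - det a b := by
  simp only [det, Prod.fst_neg, Prod.snd_neg]; ring

lemma bez (z : ℤ × ℤ) (h : Int.gcd z.1 z.2 = 1) : ∃ a b : ℤ, a * z.1 + b * z.2 = 1 := by
  obtain ⟨a, b, hab⟩ := Int.isCoprime_iff_gcd_eq_one.mpr h
  exact ⟨a, b, hab⟩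

lemma prim_of_det (z u : ℤ × ℤ) (h : det z u = 1) : Int.gcd u.1 u.2 = 1 := by
  apply Int.isCoprime_iff_gcd_eq_one.mp
  refine ⟨-z.2, z.1, ?_⟩
  simp only [det] at h; linarith [h]

lemma parallel (u w : ℤ × ℤ) (hu : Int.gcd u.1 u.2 = 1) (h : det u w = 0) :
    ∃ k : ℤ, w.1 = k * u.1 ∧ w.2 = k * u.2 := by
  obtain ⟨a, b, hab⟩ := bez u hu
  simp only [det] at h
  exact ⟨a * w.1 + b * w.2,
    by linear_combination (-w.1) * hab + (-b) * h,
    by linear_combination (-w.2) * hab + a * h⟩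

lemma parallel_pm (u w : ℤ × ℤ) (hu : Int.gcd u.1 u.2 = 1) (hw : Int.gcd w.1 w.2 = 1)
    (h : det u w = 0) : w = u ∨ w = -u := by
  obtain ⟨k, h1, h2⟩ := parallel u w hu h
  have hg : Int.gcd w.1 w.2 = k.natAbs * Int.gcd u.1 u.2 := by
    rw [h1, h2]; exact Int.gcd_mul_left k u.1 u.2
  rw [hw, hu, mul_one] at hg
  have : k = 1 ∨ k = -1 := Int.natAbs_eq_iff.mp hg.symm |>.imp (by simp) (by simp)
  rcases this with rfl | rfl
  · left; ext <;> simp [h1, h2]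
  · right; ext <;> simp [h1, h2]

lemma decomp (a b w : ℤ × ℤ) (h : det a b = 1) :
    w.1 = det w b * a.1 + det a w * b.1 ∧ w.2 = det w b * a.2 + det a w * b.2 := by
  constructor
  · have key : det w b * a.1 + det a w * b.1 = w.1 * det a b := by simp only [det]; ring
    rw [key, h, mul_one]
  · have key : det w b * a.2 + det a w * b.2 = w.2 * det a b := by simp only [det]; ring
    rw [key, h, mul_one]

lemma lin_comb (a b w : ℤ × ℤ) (h : det a b = 1) (v : ℤ × ℤ) :
    det w v = det w b * det a v + det a w * det b v := by
  simp only [det] at h ⊢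
  linear_combination (w.2 * v.1 - w.1 * v.2) * h

lemma lin_comb' (a b w : ℤ × ℤ) (h : det a b = 1) (v : ℤ × ℤ) :
    det v w = det w b * det v a + det a w * det v b := by
  have h0 := lin_comb a b w h v
  have e1 : det v w = - det w v := det_anti v w
  have e2 : det v a = - det a v := det_anti v a
  have e3 : det v b = - det b v := det_anti v b
  rw [e1, e2, e3, h0]; ring


section Core

variable (x y : ℤ × ℤ) (e : ℤ)

/-- `p`-functional: `e * det z y`. -/
def pf (z : ℤ × ℤ) : ℤ := e * det z y

/-- `q`-functional: `det x z`. -/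
def qf (z : ℤ × ℤ) : ℤ := det x z

lemma cross_pq (z w : ℤ × ℤ) :
    pf y e z * qf x w - qf x z * pf y e w = (e * det x y) * det z w := by
  simp only [pf, qf, det]; ring

lemma pf_neg (z : ℤ × ℤ) : pf y e (-z) = - pf y e z := by
  simp only [pf, det_neg_left]; ring

lemma qf_neg (z : ℤ × ℤ) : qf x (-z) = - qf x z := by
  simp only [qf, det_neg_right]

lemma next_ex (z : ℤ × ℤ) (hz : Int.gcd z.1 z.2 = 1) (hp : 1 ≤ pf y e z) :
    ∃ u, det z u = 1 ∧ 0 ≤ pf y e u ∧ pf y e u < pf y e z := by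
  obtain ⟨a, b, hab⟩ := bez z hz
  have hdu0 : det z ((-b, a) : ℤ × ℤ) = 1 := by simp only [det]; linarith
  set u0 : ℤ × ℤ := (-b, a) with hu0
  set k : ℤ := pf y e u0 / pf y e z with hk
  have hlin : pf y e (u0.1 - k * z.1, u0.2 - k * z.2) = pf y e u0 - k * pf y e z := by
    simp only [pf, det]; ring
  have hmod : pf y e u0 - k * pf y e z = pf y e u0 % pf y e z := by
    rw [Int.emod_def, hk]; ring
  refine ⟨(u0.1 - k * z.1, u0.2 - k * z.2), ?_, ?_, ?_⟩
  · simp only [det] at hdu0 ⊢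
    linear_combination hdu0
  · rw [hlin, hmod]; exact Int.emod_nonneg _ (by omega)
  · rw [hlin, hmod]; exact Int.emod_lt_of_pos _ (by omega)

/-- one step of the canonical (continued-fraction) chain -/
noncomputable def step (z : ℤ × ℤ) : ℤ × ℤ :=
  if h : Int.gcd z.1 z.2 = 1 ∧ 1 ≤ pf y e z then
    Classical.choose (next_ex y e z h.1 h.2)
  else z

lemma step_spec (z : ℤ × ℤ) (hz : Int.gcd z.1 z.2 = 1) (hp : 1 ≤ pf y e z) :
    det z (step y e z) = 1 ∧ 0 ≤ pf y e (step y e z) ∧ pf y e (step y e z) < pf y e z := by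
  rw [step, dif_pos ⟨hz, hp⟩]
  exact Classical.choose_spec (next_ex y e z hz hp)

lemma step_stay (z : ℤ × ℤ) (h : ¬ (Int.gcd z.1 z.2 = 1 ∧ 1 ≤ pf y e z)) :
    step y e z = z := by rw [step, dif_neg h]

/-- the canonical chain -/
noncomputable def S : ℕ → ℤ × ℤ
  | 0 => x
  | (k+1) => step y e (S k)

@[simp] lemma S_zero : S x y e 0 = x := rfl

lemma S_succ (k : ℕ) : S x y e (k+1) = step y e (S x y e k) := rfl

lemma pf_S_zero : pf y e (S x y e 0) = e * det x y := rfl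

lemma qf_S_zero : qf x (S x y e 0) = 0 := det_self x

lemma chain_inv (hx : Int.gcd x.1 x.2 = 1) (hc : 2 ≤ e * det x y) :
    ∀ k, Int.gcd (S x y e k).1 (S x y e k).2 = 1 ∧
    0 ≤ pf y e (S x y e k) ∧ 0 ≤ qf x (S x y e k) := by
  intro k
  induction k with
  | zero =>
    refine ⟨hx, ?_, ?_⟩
    · rw [pf_S_zero]; omega
    · rw [qf_S_zero]
  | succ k ih =>
    obtain ⟨hg, hp, hq⟩ := ih
    by_cases hp1 : 1 ≤ pf y e (S x y e k)
    · obtain ⟨hd, hp', hlt⟩ := step_spec y e _ hg hp1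
      rw [S_succ]
      refine ⟨prim_of_det _ _ hd, hp', ?_⟩
      have hcross := cross_pq x y e (S x y e k) (step y e (S x y e k))
      rw [hd, mul_one] at hcross
      by_contra hneg
      push_neg at hneg
      have h1 : pf y e (S x y e k) * qf x (step y e (S x y e k)) ≤
          1 * qf x (step y e (S x y e k)) :=
        mul_le_mul_of_nonpos_right hp1 (le_of_lt hneg)
      have h2 : 0 ≤ qf x (S x y e k) * pf y e (step y e (S x y e k)) := mul_nonneg hq hp'
      linarith
    · rw [S_succ, step_stay y e _ (by tauto)]
      exact ⟨hg, hp, hq⟩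

lemma step_edge (hx : Int.gcd x.1 x.2 = 1) (hc : 2 ≤ e * det x y)
    (k : ℕ) (hp1 : 1 ≤ pf y e (S x y e k)) :
    det (S x y e k) (S x y e (k+1)) = 1 ∧ 0 ≤ pf y e (S x y e (k+1)) ∧
    pf y e (S x y e (k+1)) < pf y e (S x y e k) ∧ 1 ≤ qf x (S x y e (k+1)) := by
  obtain ⟨hg, hp, hq⟩ := chain_inv x y e hx hc k
  obtain ⟨hd, hp', hlt⟩ := step_spec y e _ hg hp1
  have hgq := (chain_inv x y e hx hc (k+1)).2.2
  rw [S_succ] at hgq ⊢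
  refine ⟨hd, hp', hlt, ?_⟩
  have hcross := cross_pq x y e (S x y e k) (step y e (S x y e k))
  rw [hd, mul_one] at hcross
  by_contra hneg
  push_neg at hneg
  have hq0 : qf x (step y e (S x y e k)) = 0 := by omega
  rw [hq0] at hcross
  have h2 : 0 ≤ qf x (S x y e k) * pf y e (step y e (S x y e k)) := mul_nonneg hq hp'
  linarith

lemma exists_pzero (hx : Int.gcd x.1 x.2 = 1) (hc : 2 ≤ e * det x y) :
    ∃ k, pf y e (S x y e k) = 0 := by
  have key : ∀ k : ℕ, pf y e (S x y e k) = 0 ∨ pf y e (S x y e k) + k ≤ e * det x y := by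
    intro k
    induction k with
    | zero => right; rw [pf_S_zero]; omega
    | succ k ih =>
      obtain ⟨hg, hp, hq⟩ := chain_inv x y e hx hc k
      by_cases hp1 : 1 ≤ pf y e (S x y e k)
      · obtain ⟨_, _, hlt, _⟩ := step_edge x y e hx hc k hp1
        rcases ih with h0 | h0
        · omega
        · right; push_cast at h0 ⊢; omega
      · have h0 : pf y e (S x y e k) = 0 := by omega
        rw [S_succ, step_stay y e _ (by tauto)]
        left; exact h0
  refine ⟨(e * det x y).toNat, ?_⟩
  rcases key (e * det x y).toNat with h | h
  · exact h
  · have h2 := (chain_inv x y e hx hc (e * det x y).toNat).2.1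
    have h3 : (((e * det x y).toNat : ℕ) : ℤ) = e * det x y := Int.toNat_of_nonneg (by omega)
    omega

/-- length of the canonical chain -/
noncomputable def Lc (hx : Int.gcd x.1 x.2 = 1) (hc : 2 ≤ e * det x y) : ℕ :=
  Nat.find (exists_pzero x y e hx hc)


lemma det_add_right (a b c : ℤ × ℤ) : det a (b + c) = det a b + det a c := by
  simp only [det, Prod.fst_add, Prod.snd_add]; ring

lemma Lc_spec (hx : Int.gcd x.1 x.2 = 1) (hc : 2 ≤ e * det x y) :
    pf y e (S x y e (Lc x y e hx hc)) = 0 :=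
  Nat.find_spec (exists_pzero x y e hx hc)

lemma Lc_min (hx : Int.gcd x.1 x.2 = 1) (hc : 2 ≤ e * det x y)
    (k : ℕ) (hk : k < Lc x y e hx hc) : 1 ≤ pf y e (S x y e k) := by
  have h1 := Nat.find_min (exists_pzero x y e hx hc) hk
  have h2 := (chain_inv x y e hx hc k).2.1
  omega

lemma SL_pm (hx : Int.gcd x.1 x.2 = 1) (hy : Int.gcd y.1 y.2 = 1)
    (he : e = 1 ∨ e = -1) (hc : 2 ≤ e * det x y) :
    S x y e (Lc x y e hx hc) = y ∨ S x y e (Lc x y e hx hc) = -y := by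
  have h0 := Lc_spec x y e hx hc
  have hdet0 : det y (S x y e (Lc x y e hx hc)) = 0 := by
    simp only [pf] at h0
    have : det (S x y e (Lc x y e hx hc)) y = 0 := by rcases he with rfl | rfl <;> omega
    rw [det_anti] at this; omega
  exact parallel_pm y _ hy (chain_inv x y e hx hc _).1 hdet0

lemma Lc_ge2 (hx : Int.gcd x.1 x.2 = 1) (hy : Int.gcd y.1 y.2 = 1)
    (he : e = 1 ∨ e = -1) (hc : 2 ≤ e * det x y) :
    2 ≤ Lc x y e hx hc := by
  have hL0 : Lc x y e hx hc ≠ 0 := by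
    intro h
    have := Lc_spec x y e hx hc
    rw [h, pf_S_zero] at this
    omega
  by_contra hL
  have hL1 : Lc x y e hx hc = 1 := by omega
  have hedge := (step_edge x y e hx hc 0 (by rw [pf_S_zero]; omega)).1
  have hpm := SL_pm x y e hx hy he hc
  rw [hL1] at hpm
  rw [S_zero] at hedge
  rcases hpm with h1 | h1 <;> rw [h1] at hedge
  · rcases he with rfl | rfl <;> simp only [one_mul, neg_one_mul] at hc <;> omega
  · rw [det_neg_right] at hedge
    rcases he with rfl | rfl <;> simp only [one_mul, neg_one_mul] at hc <;> omega

lemma conv (hx : Int.gcd x.1 x.2 = 1) (hc : 2 ≤ e * det x y)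
    (j : ℕ) (hj : j + 1 < Lc x y e hx hc) :
    ∃ m : ℤ, 2 ≤ m ∧ (S x y e (j+2)).1 + (S x y e j).1 = m * (S x y e (j+1)).1 ∧
      (S x y e (j+2)).2 + (S x y e j).2 = m * (S x y e (j+1)).2 := by
  have hedgej := (step_edge x y e hx hc j (Lc_min x y e hx hc j (by omega))).1
  have hdecj := (step_edge x y e hx hc j (Lc_min x y e hx hc j (by omega))).2.2.1
  have hpj1 := Lc_min x y e hx hc (j+1) hj
  have hedgej1 := (step_edge x y e hx hc (j+1) hpj1).1
  have hpj2 := (step_edge x y e hx hc (j+1) hpj1).2.1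
  have hdet0 : det (S x y e (j+1)) (S x y e (j+2) + S x y e j) = 0 := by
    rw [det_add_right, hedgej1]
    have : det (S x y e (j+1)) (S x y e j) = - det (S x y e j) (S x y e (j+1)) :=
      det_anti _ _
    rw [this, hedgej]; ring
  obtain ⟨m, hm1, hm2⟩ := parallel _ _ (chain_inv x y e hx hc (j+1)).1 hdet0
  simp only [Prod.fst_add, Prod.snd_add] at hm1 hm2
  refine ⟨m, ?_, hm1, hm2⟩
  -- bound m ≥ 2 via pf
  have hpf : pf y e (S x y e (j+2)) + pf y e (S x y e j) = m * pf y e (S x y e (j+1)) := by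
    simp only [pf, det]
    linear_combination e * y.2 * hm1 - e * y.1 * hm2
  by_contra hm
  push_neg at hm
  have hle : m ≤ 1 := by omega
  nlinarith [mul_le_mul_of_nonneg_right hle (le_trans (by norm_num) hpj1)]

lemma q_mono (hx : Int.gcd x.1 x.2 = 1) (hc : 2 ≤ e * det x y) :
    ∀ k, k < Lc x y e hx hc →
      qf x (S x y e k) + 1 ≤ qf x (S x y e (k+1)) := by
  intro k
  induction k using Nat.strong_induction_on with
  | _ k ih =>
    intro hk
    match k with
    | 0 =>
      have h := (step_edge x y e hx hc 0 (by rw [pf_S_zero]; omega)).2.2.2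
      rw [qf_S_zero]
      omega
    | (j+1) =>
      obtain ⟨m, hm2, hm, hm'⟩ := conv x y e hx hc j hk
      have hq2 : qf x (S x y e (j+2)) + qf x (S x y e j) = m * qf x (S x y e (j+1)) := by
        simp only [qf, det]
        linear_combination x.1 * hm' - x.2 * hm
      have ihj := ih j (by omega) (by omega)
      have hq1 : 0 ≤ qf x (S x y e (j+1)) := (chain_inv x y e hx hc (j+1)).2.2
      nlinarith

lemma q_ge (hx : Int.gcd x.1 x.2 = 1) (hc : 2 ≤ e * det x y) :
    ∀ k, k ≤ Lc x y e hx hc → (k : ℤ) ≤ qf x (S x y e k) := by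
  intro k
  induction k with
  | zero => intro _; rw [qf_S_zero]; simp
  | succ k ih =>
    intro hk
    have h1 := q_mono x y e hx hc k (by omega)
    have h2 := ih (by omega)
    push_cast
    omega

lemma cont (hx : Int.gcd x.1 x.2 = 1) (hc : 2 ≤ e * det x y)
    (j : ℕ) : ∀ k, j ≤ k → k ≤ Lc x y e hx hc →
      ((k : ℤ) - (j : ℤ) ≤ det (S x y e j) (S x y e k)) ∧
      (k < Lc x y e hx hc →
        det (S x y e j) (S x y e k) + 1 ≤ det (S x y e j) (S x y e (k+1))) := by
  intro k hjk
  induction k, hjk using Nat.le_induction with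
  | base =>
    intro hj
    constructor
    · rw [det_self]; omega
    · intro hjL
      rw [det_self, (step_edge x y e hx hc j (Lc_min x y e hx hc j hjL)).1]
      omega
  | succ k hjk ih =>
    intro hk1
    have ihk := ih (by omega)
    have hstep := ihk.2 (by omega)
    have hfirst : ((k : ℤ) + 1 - (j : ℤ) ≤ det (S x y e j) (S x y e (k+1))) := by
      have := ihk.1
      omega
    refine ⟨hfirst, ?_⟩
    intro hk2
    obtain ⟨m, hm2, hm, hm'⟩ := conv x y e hx hc k hk2
    have hlin : det (S x y e j) (S x y e (k+2)) + det (S x y e j) (S x y e k)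
        = m * det (S x y e j) (S x y e (k+1)) := by
      simp only [det]
      linear_combination (S x y e j).1 * hm' - (S x y e j).2 * hm
    have hd1 : (0:ℤ) ≤ det (S x y e j) (S x y e (k+1)) := by omega
    nlinarith

lemma cont_lb (hx : Int.gcd x.1 x.2 = 1) (hc : 2 ≤ e * det x y)
    (j k : ℕ) (hjk : j < k) (hk : k ≤ Lc x y e hx hc) :
    (k : ℤ) - (j : ℤ) ≤ det (S x y e j) (S x y e k) :=
  (cont x y e hx hc j k (by omega) hk).1

lemma S_ne (hx : Int.gcd x.1 x.2 = 1) (hc : 2 ≤ e * det x y)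
    (j k : ℕ) (hj : j ≤ Lc x y e hx hc) (hk : k ≤ Lc x y e hx hc) (hjk : j ≠ k) :
    S x y e j ≠ S x y e k ∧ S x y e j ≠ - S x y e k := by
  have key : ∀ a b : ℕ, a < b → b ≤ Lc x y e hx hc →
      S x y e a ≠ S x y e b ∧ S x y e a ≠ - S x y e b := by
    intro a b hab hb
    have h1 := cont_lb x y e hx hc a b hab hb
    constructor
    · intro h; rw [h, det_self] at h1; omega
    · intro h
      rw [h, det_neg_left, det_self] at h1; omega
  rcases Nat.lt_or_ge j k with h | h
  · exact key j k h hk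
  · have hkj : k < j := by omega
    obtain ⟨h1, h2⟩ := key k j hkj hj
    constructor
    · exact fun h => h1 h.symm
    · intro h
      apply h2
      rw [h]; simp

lemma lam_lb (hx : Int.gcd x.1 x.2 = 1) (hc : 2 ≤ e * det x y)
    (j : ℕ) (hj : j < Lc x y e hx hc) (w : ℤ × ℤ)
    (hgw : Int.gcd w.1 w.2 = 1) (hpw : 0 ≤ pf y e w) (hqw : 0 ≤ qf x w) :
    1 ≤ det w (S x y e (j+1)) - det w (S x y e j) := by
  have hedge := (step_edge x y e hx hc j (Lc_min x y e hx hc j hj)).1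
  set A : ℤ := det w (S x y e (j+1)) with hA
  set B : ℤ := det (S x y e j) w with hB
  have hpf : pf y e w = A * pf y e (S x y e j) + B * pf y e (S x y e (j+1)) := by
    have h0 := lin_comb (S x y e j) (S x y e (j+1)) w hedge y
    simp only [pf]
    rw [h0]; ring
  have hqf : qf x w = A * qf x (S x y e j) + B * qf x (S x y e (j+1)) := by
    have h0 := lin_comb' (S x y e j) (S x y e (j+1)) w hedge x
    simp only [qf]
    linarith [h0]
  have hwSj : det w (S x y e j) = - B := by
    have h0 := lin_comb (S x y e j) (S x y e (j+1)) w hedge (S x y e j)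
    rw [det_self, det_anti (S x y e (j+1)) (S x y e j), hedge] at h0
    rw [h0]; ring
  rw [hwSj]
  have hpj := (step_edge x y e hx hc j (Lc_min x y e hx hc j hj)).2.2.1
  have hpj1 := (step_edge x y e hx hc j (Lc_min x y e hx hc j hj)).2.1
  have hqj := (chain_inv x y e hx hc j).2.2
  have hqm := q_mono x y e hx hc j hj
  by_contra hcon
  push_neg at hcon
  have hAB : A + B ≤ 0 := by omega
  have hBnn : 0 ≤ B := by nlinarith
  have hAnn : 0 ≤ A := by nlinarith
  have hA0 : A = 0 := by omega
  have hB0 : B = 0 := by omega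
  obtain ⟨hw1, hw2⟩ := decomp (S x y e j) (S x y e (j+1)) w hedge
  rw [← hA, ← hB, hA0, hB0] at hw1 hw2
  simp only [zero_mul, add_zero, zero_add] at hw1 hw2
  rw [hw1, hw2] at hgw
  simp at hgw


lemma gcd_neg_pair (a : ℤ × ℤ) : Int.gcd (-a).1 (-a).2 = Int.gcd a.1 a.2 := by
  simp [Prod.fst_neg, Prod.snd_neg, Int.gcd]

lemma pf_y_zero : pf y e y = 0 := by simp [pf, det_self]

set_option maxHeartbeats 3000000 in
lemma crossing (hx : Int.gcd x.1 x.2 = 1) (hy : Int.gcd y.1 y.2 = 1)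
    (he : e = 1 ∨ e = -1) (hc : 2 ≤ e * det x y)
    (n : ℕ) (z : ℕ → ℤ × ℤ)
    (hz0 : z 0 = x) (hzn : z n = y ∨ z n = -y)
    (hg : ∀ i, i ≤ n → Int.gcd (z i).1 (z i).2 = 1)
    (hd : ∀ i, i < n → |det (z i) (z (i+1))| = 1)
    (hmid : ∀ i, 0 < i → i < n → 0 < pf y e (z i) * qf x (z i)) :
    ∀ j, j ≤ Lc x y e hx hc →
      ∃ i, i ≤ n ∧ (z i = S x y e j ∨ z i = - S x y e j) := by
  intro j hj
  rcases Nat.eq_zero_or_pos j with rfl | hj0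
  · exact ⟨0, by omega, Or.inl (by rw [hz0, S_zero])⟩
  rcases eq_or_lt_of_le hj with heq | hjL
  · -- j = Lc
    refine ⟨n, le_refl n, ?_⟩
    rw [heq]
    rcases hzn with h1 | h1 <;> rcases SL_pm x y e hx hy he hc with h2 | h2 <;>
      rw [h1, h2] <;> simp
  -- main case 0 < j < Lc
  have hn1 : 1 ≤ n := by
    by_contra hcon
    have hn0 : n = 0 := by omega
    rw [hn0, hz0] at hzn
    rcases hzn with h | h <;> rw [h] at hc
    · rw [det_self] at hc; omega
    · rw [det_neg_left, det_self] at hc; omega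
  obtain ⟨w, hw⟩ : ∃ w : ℕ → ℤ × ℤ,
      ∀ i, w i = if 0 ≤ pf y e (z i) ∧ 0 ≤ qf x (z i) then z i else -(z i) :=
    ⟨_, fun _ => rfl⟩
  have hwpm : ∀ i, w i = z i ∨ w i = -(z i) := by
    intro i; rw [hw]; split_ifs
    · exact Or.inl rfl
    · exact Or.inr rfl
  have hpfzn : pf y e (z n) = 0 := by
    rcases hzn with h1 | h1 <;> rw [h1]
    · exact pf_y_zero y e
    · rw [pf_neg, pf_y_zero]; ring
  have hwnn : ∀ i, i ≤ n → 0 ≤ pf y e (w i) ∧ 0 ≤ qf x (w i) := by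
    intro i hi
    rw [hw]
    split_ifs with h
    · exact h
    · rw [pf_neg, qf_neg]
      push_neg at h
      rcases Nat.eq_zero_or_pos i with rfl | hi0
      · exfalso
        rw [hz0] at h
        have h1 : 0 ≤ pf y e x := by have : pf y e x = e * det x y := rfl; omega
        have h2 := h h1
        have : qf x x = 0 := det_self x
        omega
      rcases eq_or_lt_of_le hi with rfl | hilt
      · have h2 := h (by omega)
        omega
      · have hprod := hmid i hi0 hilt
        by_cases hp : 0 ≤ pf y e (z i)
        · have hq := h hp
          nlinarith
        · push_neg at hp
          constructor
          · omega
          · nlinarith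
  have hwg : ∀ i, i ≤ n → Int.gcd (w i).1 (w i).2 = 1 := by
    intro i hi
    rcases hwpm i with h | h <;> rw [h]
    · exact hg i hi
    · rw [gcd_neg_pair]; exact hg i hi
  have hqj : 1 ≤ qf x (S x y e j) := by
    have h1 := q_ge x y e hx hc j (le_of_lt hjL)
    have h2 : (1 : ℤ) ≤ (j : ℤ) := by exact_mod_cast hj0
    omega
  have hpj : 1 ≤ pf y e (S x y e j) := Lc_min x y e hx hc j hjL
  have hfind : ∃ i0, i0 < n ∧
      (0 < pf y e (w i0) * qf x (S x y e j) - qf x (w i0) * pf y e (S x y e j)) ∧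
      ¬ (0 < pf y e (w (i0+1)) * qf x (S x y e j) - qf x (w (i0+1)) * pf y e (S x y e j)) := by
    classical
    have hP0 : 0 < pf y e (w 0) * qf x (S x y e j) - qf x (w 0) * pf y e (S x y e j) := by
      have hw0 : w 0 = x := by
        rw [hw, hz0, if_pos]
        constructor
        · have : pf y e x = e * det x y := rfl; omega
        · have : qf x x = 0 := det_self x; omega
      rw [hw0]
      have e1 : pf y e x = e * det x y := rfl
      have e2 : qf x x = 0 := det_self x
      rw [e1, e2]
      nlinarith
    have hPn : ¬ (0 < pf y e (w n) * qf x (S x y e j) - qf x (w n) * pf y e (S x y e j)) := by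
      have h1 : pf y e (w n) = 0 := by
        rcases hwpm n with h | h <;> rw [h]
        · exact hpfzn
        · rw [pf_neg, hpfzn]; ring
      have h2 := (hwnn n (le_refl n)).2
      rw [h1]
      nlinarith
    set P : ℕ → Prop :=
      fun i => 0 < pf y e (w i) * qf x (S x y e j) - qf x (w i) * pf y e (S x y e j) with hPdef
    have hinst : DecidablePred P := fun i => by rw [hPdef]; infer_instance
    have hi0P : P (Nat.findGreatest P n) := Nat.findGreatest_spec (m := 0) (by omega) hP0
    have hi0n : Nat.findGreatest P n ≤ n := Nat.findGreatest_le n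
    have hi0lt : Nat.findGreatest P n < n := by
      rcases eq_or_lt_of_le hi0n with h | h
      · exfalso; apply hPn; rw [← h]; exact hi0P
      · exact h
    have hnext : ¬ P (Nat.findGreatest P n + 1) :=
      Nat.findGreatest_is_greatest (Nat.lt_succ_self _) (by omega)
    exact ⟨Nat.findGreatest P n, hi0lt, hi0P, hnext⟩
  obtain ⟨i0, hi0lt, hi0P, hnext⟩ := hfind
  have hi0n : i0 ≤ n := le_of_lt hi0lt
  -- abbreviations
  have habs : |det (w i0) (w (i0+1))| = 1 := by
    have h0 := hd i0 hi0lt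
    rcases hwpm i0 with h1 | h1 <;> rcases hwpm (i0+1) with h2 | h2 <;> rw [h1, h2] <;>
      simpa [det_neg_left, det_neg_right] using h0
  have hduv : det (w i0) (w (i0+1)) = 1 ∨ det (w i0) (w (i0+1)) = -1 := by
    rcases abs_eq (by norm_num : (0:ℤ) ≤ 1) |>.mp habs with h | h
    · exact Or.inl h
    · exact Or.inr h
  have hB1 : 1 ≤ det (w i0) (S x y e j) := by
    have hcr := cross_pq x y e (w i0) (S x y e j)
    nlinarith
  have hA0 : 0 ≤ det (S x y e j) (w (i0+1)) := by
    have hcr := cross_pq x y e (w (i0+1)) (S x y e j)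
    push_neg at hnext
    have h1 : det (w (i0+1)) (S x y e j) ≤ 0 := by nlinarith
    rw [det_anti] at h1
    omega
  rcases hduv with hσ | hσ
  · -- positively oriented edge
    obtain ⟨hS1, hS2⟩ := decomp (w i0) (w (i0+1)) (S x y e j) hσ
    by_cases hAz : det (S x y e j) (w (i0+1)) = 0
    · obtain hv := parallel_pm (S x y e j) (w (i0+1))
        (chain_inv x y e hx hc j).1 (hwg (i0+1) (by omega)) hAz
      refine ⟨i0 + 1, by omega, ?_⟩
      rcases hwpm (i0+1) with h1 | h1 <;> rcases hv with h2 | h2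
      · left; rw [← h2, h1]
      · right; rw [← h2, h1]
      · right
        have : z (i0+1) = - w (i0+1) := by rw [h1]; simp
        rw [this, h2]
      · left
        have : z (i0+1) = - w (i0+1) := by rw [h1]; simp
        rw [this, h2]; simp
    · exfalso
      have hA1 : 1 ≤ det (S x y e j) (w (i0+1)) := by omega
      have hlamu := lam_lb x y e hx hc j hjL (w i0) (hwg i0 (by omega))
        (hwnn i0 (by omega)).1 (hwnn i0 (by omega)).2
      have hlamv := lam_lb x y e hx hc j hjL (w (i0+1)) (hwg (i0+1) (by omega))
        (hwnn (i0+1) (by omega)).1 (hwnn (i0+1) (by omega)).2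
      have hlin : ∀ A B : ℤ, (S x y e j).1 = A * (w i0).1 + B * (w (i0+1)).1 →
          (S x y e j).2 = A * (w i0).2 + B * (w (i0+1)).2 →
          ∀ t : ℤ × ℤ, det (S x y e j) t = A * det (w i0) t + B * det (w (i0+1)) t := by
        intro A B h1 h2 t
        simp only [det]
        rw [h1, h2]; ring
      have ht1 := hlin _ _ hS1 hS2 (S x y e (j+1))
      have ht2 := hlin _ _ hS1 hS2 (S x y e j)
      rw [det_self] at ht2
      have hedge := (step_edge x y e hx hc j (Lc_min x y e hx hc j hjL)).1
      have m1 : det (S x y e j) (w (i0+1)) * 1 ≤ det (S x y e j) (w (i0+1)) *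
          (det (w i0) (S x y e (j+1)) - det (w i0) (S x y e j)) :=
        mul_le_mul_of_nonneg_left hlamu (by omega)
      have m2 : det (w i0) (S x y e j) * 1 ≤ det (w i0) (S x y e j) *
          (det (w (i0+1)) (S x y e (j+1)) - det (w (i0+1)) (S x y e j)) :=
        mul_le_mul_of_nonneg_left hlamv (by omega)
      nlinarith [ht1, ht2, hedge, m1, m2, hA1, hB1]
  · -- negatively oriented edge: contradiction via qf
    have hσ' : det (w (i0+1)) (w i0) = 1 := by
      rw [det_anti]; omega
    obtain ⟨hS1, hS2⟩ := decomp (w (i0+1)) (w i0) (S x y e j) hσ'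
    exfalso
    have hqlin : ∀ A B : ℤ, (S x y e j).1 = A * (w (i0+1)).1 + B * (w i0).1 →
        (S x y e j).2 = A * (w (i0+1)).2 + B * (w i0).2 →
        qf x (S x y e j) = A * qf x (w (i0+1)) + B * qf x (w i0) := by
      intro A B h1 h2
      simp only [qf, det]
      rw [h1, h2]; ring
    have hq := hqlin _ _ hS1 hS2
    have h1 : det (S x y e j) (w i0) ≤ -1 := by
      have := det_anti (S x y e j) (w i0)
      omega
    have h2 : det (w (i0+1)) (S x y e j) ≤ 0 := by
      have := det_anti (w (i0+1)) (S x y e j)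
      omega
    have h3 := (hwnn i0 (by omega)).2
    have h4 := (hwnn (i0+1) (by omega)).2
    have m1 : det (S x y e j) (w i0) * qf x (w (i0+1)) ≤ 0 :=
      mul_nonpos_of_nonpos_of_nonneg (by omega) h4
    have m2 : det (w (i0+1)) (S x y e j) * qf x (w i0) ≤ 0 :=
      mul_nonpos_of_nonpos_of_nonneg (by omega) h3
    linarith


set_option maxHeartbeats 1000000 in
lemma lower_bound (hx : Int.gcd x.1 x.2 = 1) (hy : Int.gcd y.1 y.2 = 1)
    (he : e = 1 ∨ e = -1) (hc : 2 ≤ e * det x y)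
    (n : ℕ) (z : ℕ → ℤ × ℤ)
    (hz0 : z 0 = x) (hzn : z n = y ∨ z n = -y)
    (hg : ∀ i, i ≤ n → Int.gcd (z i).1 (z i).2 = 1)
    (hd : ∀ i, i < n → |det (z i) (z (i+1))| = 1)
    (hdist : ∀ i j, i ≤ n → j ≤ n → i ≠ j → z i ≠ z j ∧ z i ≠ -z j)
    (hmid : ∀ i, 0 < i → i < n → 0 < pf y e (z i) * qf x (z i)) :
    Lc x y e hx hc ≤ n ∧
      (n = Lc x y e hx hc → ∀ i, i ≤ n → z i = S x y e i ∨ z i = - S x y e i) := by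
  have hcr := crossing x y e hx hy he hc n z hz0 hzn hg hd hmid
  have hcr' : ∀ j : Fin (Lc x y e hx hc + 1), ∃ i : Fin (n+1),
      (z i.1 = S x y e j.1 ∨ z i.1 = - S x y e j.1) := by
    intro j
    obtain ⟨i, hi, hzi⟩ := hcr j.1 (Nat.lt_succ_iff.mp j.2)
    exact ⟨⟨i, Nat.lt_succ_of_le hi⟩, hzi⟩
  choose F hF using hcr'
  have hSpm : ∀ (a b : ℕ), a ≤ Lc x y e hx hc → b ≤ Lc x y e hx hc →
      (S x y e a = S x y e b ∨ S x y e a = - S x y e b) → a = b := by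
    intro a b ha hb hab
    by_contra hne
    obtain ⟨hne1, hne2⟩ := S_ne x y e hx hc a b ha hb hne
    rcases hab with h | h
    exacts [hne1 h, hne2 h]
  have hinj : Function.Injective F := by
    intro a b hab
    have h1 := hF a
    have h2 := hF b
    rw [hab] at h1
    have hSab : S x y e a.1 = S x y e b.1 ∨ S x y e a.1 = - S x y e b.1 := by
      rcases h1 with h1 | h1 <;> rcases h2 with h2 | h2
      · exact Or.inl (h1.symm.trans h2)
      · exact Or.inr (h1.symm.trans h2)
      · refine Or.inr ?_
        have h3 : - S x y e a.1 = S x y e b.1 := by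
          rw [← h1, ← h2]
        rw [← h3]; simp
      · refine Or.inl ?_
        have h3 : - S x y e a.1 = - S x y e b.1 := by rw [← h1, ← h2]
        simpa using h3
    exact Fin.ext (hSpm a.1 b.1 (Nat.lt_succ_iff.mp a.2) (Nat.lt_succ_iff.mp b.2) hSab)
  have hcard : Lc x y e hx hc + 1 ≤ n + 1 := by
    have := Fintype.card_le_of_injective F hinj
    simpa using this
  refine ⟨by omega, ?_⟩
  -- rigidity
  intro hn
  have hbij : Function.Bijective F :=
    (Fintype.bijective_iff_injective_and_card F).mpr
      ⟨hinj, by simp only [Fintype.card_fin]; omega⟩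
  have hex : ∀ i : ℕ, ∃ jj : ℕ, i ≤ n →
      (jj ≤ Lc x y e hx hc ∧ (z i = S x y e jj ∨ z i = - S x y e jj)) := by
    intro i
    by_cases hi : i ≤ n
    · obtain ⟨j, hj⟩ := hbij.2 ⟨i, Nat.lt_succ_of_le hi⟩
      have hFj := hF j
      rw [hj] at hFj
      exact ⟨j.1, fun _ => ⟨Nat.lt_succ_iff.mp j.2, hFj⟩⟩
    · exact ⟨0, fun h => absurd h hi⟩
  choose π hπ using hex
  have huniq : ∀ (i jj : ℕ), i ≤ n → jj ≤ Lc x y e hx hc →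
      (z i = S x y e jj ∨ z i = - S x y e jj) → π i = jj := by
    intro i jj hi hjj hz
    have h1 := hπ i hi
    apply hSpm (π i) jj h1.1 hjj
    rcases h1.2 with h | h <;> rcases hz with h' | h'
    · exact Or.inl (h.symm.trans h')
    · exact Or.inr (h.symm.trans h')
    · refine Or.inr ?_
      have h3 : - S x y e (π i) = S x y e jj := by rw [← h, ← h']
      rw [← h3]; simp
    · refine Or.inl ?_
      have h3 : - S x y e (π i) = - S x y e jj := by rw [← h, ← h']
      simpa using h3
  have hπ0 : π 0 = 0 := by
    apply huniq 0 0 (by omega) (by omega)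
    exact Or.inl (by rw [hz0]; rfl)
  have hSn : S x y e n = y ∨ S x y e n = -y := by
    rw [hn]; exact SL_pm x y e hx hy he hc
  have hπn : π n = n := by
    apply huniq n n (le_refl n) (by omega)
    rcases hzn with h1 | h1 <;> rcases hSn with h2 | h2
    · exact Or.inl (h1.trans h2.symm)
    · right; rw [h1, h2, neg_neg]
    · right; rw [h1, h2]
    · left; rw [h1, h2]
  have hstep : ∀ i, i < n → (π (i+1) ≤ π i + 1 ∧ π i ≤ π (i+1) + 1) := by
    intro i hi
    have h1 := hπ i (by omega)
    have h2 := hπ (i+1) (by omega)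
    have hdet1 := hd i hi
    have habs : |det (S x y e (π i)) (S x y e (π (i+1)))| = 1 := by
      rcases h1.2 with hA | hA <;> rcases h2.2 with hB | hB <;> rw [hA, hB] at hdet1 <;>
        simpa [det_neg_left, det_neg_right] using hdet1
    have hd1 : det (S x y e (π i)) (S x y e (π (i+1))) ≤ 1 :=
      (abs_le.mp (le_of_eq habs)).2
    rcases Nat.lt_trichotomy (π i) (π (i+1)) with hlt | heq | hgt
    · have hcl := cont_lb x y e hx hc (π i) (π (i+1)) hlt h2.1
      constructor
      · by_contra hcon
        push_neg at hcon
        have hge : ((2:ℤ)) ≤ (π (i+1) : ℤ) - (π i : ℤ) := by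
          push_cast
          omega
        omega
      · omega
    · exfalso
      obtain ⟨hne1, hne2⟩ := hdist i (i+1) (by omega) (by omega) (by omega)
      rcases h1.2 with hA | hA <;> rcases h2.2 with hB | hB <;> rw [heq] at hA
      · exact hne1 (hA.trans hB.symm)
      · apply hne2; rw [hA, hB, neg_neg]
      · apply hne2; rw [hA, hB]
      · apply hne1; rw [hA, hB]
    · have hcl := cont_lb x y e hx hc (π (i+1)) (π i) hgt h1.1
      have habs' : |det (S x y e (π (i+1))) (S x y e (π i))| = 1 := by
        rw [det_anti]
        simpa using habs
      have hd2 : det (S x y e (π (i+1))) (S x y e (π i)) ≤ 1 :=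
        (abs_le.mp (le_of_eq habs')).2
      constructor
      · omega
      · by_contra hcon
        push_neg at hcon
        have hge : ((2:ℤ)) ≤ (π i : ℤ) - (π (i+1) : ℤ) := by
          push_cast
          omega
        omega
  have hub : ∀ i, i ≤ n → π i ≤ i := by
    intro i
    induction i with
    | zero => intro _; omega
    | succ i ih =>
      intro hi
      have hs := (hstep i (by omega)).1
      have hih := ih (by omega)
      omega
  have hlbm : ∀ m i, i + m = n → n ≤ π i + m := by
    intro m
    induction m with
    | zero =>
      intro i hi
      have hin : i = n := by omega
      subst hin
      omega
    | succ m ih =>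
      intro i hi
      have h1 := ih (i+1) (by omega)
      have h2 := (hstep i (by omega)).1
      omega
  intro i hi
  have h1 := hub i hi
  have h2 := hlbm (n - i) i (by omega)
  have hii : π i = i := by omega
  have hfin := (hπ i hi).2
  rw [hii] at hfin
  exact hfin


lemma detxy_ne (he : e = 1 ∨ e = -1) (hc : 2 ≤ e * det x y) : det x y ≠ 0 := by
  rcases he with rfl | rfl <;> intro h <;> rw [h] at hc <;> simp at hc

set_option maxHeartbeats 1000000 in
lemma canonical_consistent (hx : Int.gcd x.1 x.2 = 1) (hy : Int.gcd y.1 y.2 = 1)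
    (he : e = 1 ∨ e = -1) (hc : 2 ≤ e * det x y) :
    IsConsistentPath x y (e : ℚ) (Lc x y e hx hc)
      (fun i => if i = Lc x y e hx hc then y else S x y e i) := by
  have hL2 := Lc_ge2 x y e hx hy he hc
  have hpm := SL_pm x y e hx hy he hc
  have hD : (det x y : ℚ) ≠ 0 := by
    exact_mod_cast detxy_ne x y e he hc
  constructor
  · refine ⟨?_, ?_, ?_, ?_, ?_⟩
    · simp only [if_neg (by omega : ¬ (0 = Lc x y e hx hc))]
      exact S_zero x y e
    · simp
    · intro i hi
      by_cases h : i = Lc x y e hx hc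
      · simp only [if_pos h]; exact hy
      · simp only [if_neg h]; exact (chain_inv x y e hx hc i).1
    · intro i hi
      have hi' : i ≠ Lc x y e hx hc := by omega
      simp only [if_neg hi']
      have hedge := (step_edge x y e hx hc i (Lc_min x y e hx hc i hi)).1
      by_cases h : i + 1 = Lc x y e hx hc
      · simp only [if_pos h]
        rw [h] at hedge
        rcases hpm with h1 | h1 <;> rw [h1] at hedge
        · rw [hedge]; norm_num
        · rw [det_neg_right] at hedge
          have : det (S x y e i) y = -1 := by omega
          rw [this]; norm_num
      · simp only [if_neg h]
        rw [hedge]; norm_num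
    · intro i j hi hj hij
      by_cases h1 : i = Lc x y e hx hc <;> by_cases h2 : j = Lc x y e hx hc
      · omega
      · simp only [if_pos h1, if_neg h2]
        have hlt : j < Lc x y e hx hc := by omega
        obtain ⟨d1, d2⟩ := S_ne x y e hx hc j (Lc x y e hx hc) (by omega) (le_refl _)
          (by omega)
        rcases hpm with hh | hh <;> rw [hh] at d1 d2
        · exact ⟨fun h => d1 h.symm, fun h => d2 (neg_eq_iff_eq_neg.mp h.symm)⟩
        · rw [neg_neg] at d2
          exact ⟨fun h => d2 h.symm, fun h => d1 (neg_eq_iff_eq_neg.mp h.symm)⟩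
      · simp only [if_neg h1, if_pos h2]
        obtain ⟨d1, d2⟩ := S_ne x y e hx hc i (Lc x y e hx hc) (by omega) (le_refl _)
          (by omega)
        rcases hpm with hh | hh <;> rw [hh] at d1 d2
        · exact ⟨d1, d2⟩
        · rw [neg_neg] at d2
          exact ⟨d2, d1⟩
      · simp only [if_neg h1, if_neg h2]
        exact S_ne x y e hx hc i j (by omega) (by omega) hij
  · intro i hi0 hiL
    simp only [if_neg (by omega : ¬ i = Lc x y e hx hc)]
    refine ⟨(det (S x y e i) y : ℚ) / (det x y : ℚ),
      (det x (S x y e i) : ℚ) / (det x y : ℚ), ?_, ?_, ?_⟩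
    · have key : ((S x y e i).1 : ℚ) * (det x y : ℚ) =
          (det (S x y e i) y : ℚ) * x.1 + (det x (S x y e i) : ℚ) * y.1 := by
        simp only [det]
        push_cast
        ring
      field_simp
      linarith [key]
    · have key : ((S x y e i).2 : ℚ) * (det x y : ℚ) =
          (det (S x y e i) y : ℚ) * x.2 + (det x (S x y e i) : ℚ) * y.2 := by
        simp only [det]
        push_cast
        ring
      field_simp
      linarith [key]
    · have hpq : 0 < (pf y e (S x y e i) * qf x (S x y e i) : ℤ) := by
        have h1 := Lc_min x y e hx hc i hiL
        have h2 := q_ge x y e hx hc i (by omega)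
        have h3 : (1:ℤ) ≤ (i:ℤ) := by exact_mod_cast hi0
        nlinarith
      have heq : (e:ℚ) * ((det (S x y e i) y : ℚ) / (det x y : ℚ) *
          ((det x (S x y e i) : ℚ) / (det x y : ℚ))) =
          ((pf y e (S x y e i) * qf x (S x y e i) : ℤ) : ℚ) / ((det x y : ℚ))^2 := by
        simp only [pf, qf]
        push_cast
        field_simp
      rw [heq]
      apply div_pos
      · exact_mod_cast hpq
      · exact lt_of_le_of_ne (sq_nonneg _) (Ne.symm (pow_ne_zero 2 hD))

lemma mid_pos (he : e = 1 ∨ e = -1) (hc : 2 ≤ e * det x y)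
    (n : ℕ) (z : ℕ → ℤ × ℤ) (h : IsConsistentPath x y (e : ℚ) n z) :
    ∀ i, 0 < i → i < n → 0 < pf y e (z i) * qf x (z i) := by
  intro i h1 h2
  obtain ⟨α, β, he1, he2, hsig⟩ := h.2 i h1 h2
  have hD : (det x y : ℚ) ≠ 0 := by exact_mod_cast detxy_ne x y e he hc
  have hα : (det (z i) y : ℚ) = α * (det x y : ℚ) := by
    simp only [det]
    push_cast
    linear_combination (y.2 : ℚ) * he1 - (y.1 : ℚ) * he2
  have hβ : (det x (z i) : ℚ) = β * (det x y : ℚ) := by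
    simp only [det]
    push_cast
    linear_combination (x.1 : ℚ) * he2 - (x.2 : ℚ) * he1
  have heq : ((pf y e (z i) * qf x (z i) : ℤ) : ℚ) =
      ((e:ℚ) * (α * β)) * ((det x y : ℚ))^2 := by
    have expand : ((pf y e (z i) * qf x (z i) : ℤ) : ℚ) =
        (e : ℚ) * ((det (z i) y : ℚ) * (det x (z i) : ℚ)) := by
      push_cast [pf, qf]
      ring
    rw [expand, hα, hβ]
    ring
  have hD2 : (0:ℚ) < ((det x y : ℚ))^2 :=
    lt_of_le_of_ne (sq_nonneg _) (Ne.symm (pow_ne_zero 2 hD))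
  have : (0:ℚ) < ((pf y e (z i) * qf x (z i) : ℤ) : ℚ) := by
    rw [heq]
    exact mul_pos hsig hD2
  exact_mod_cast this

lemma core_main (hx : Int.gcd x.1 x.2 = 1) (hy : Int.gcd y.1 y.2 = 1)
    (he : e = 1 ∨ e = -1) (hc : 2 ≤ e * det x y) :
    ∃ (L : ℕ) (T : ℕ → ℤ × ℤ), 2 ≤ L ∧ IsConsistentPath x y (e:ℚ) L T ∧
      ∀ n z, IsConsistentPath x y (e:ℚ) n z →
        (L ≤ n ∧ (n = L → ∀ i, i ≤ n → z i = T i ∨ z i = - T i)) := by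
  refine ⟨Lc x y e hx hc, fun i => if i = Lc x y e hx hc then y else S x y e i,
    Lc_ge2 x y e hx hy he hc, canonical_consistent x y e hx hy he hc, ?_⟩
  intro n z h
  have hz0 := h.1.1
  have hzn := h.1.2.1
  have hg := h.1.2.2.1
  have hd := h.1.2.2.2.1
  have hdist := h.1.2.2.2.2
  have hmid := mid_pos x y e he hc n z h
  have hlow := lower_bound x y e hx hy he hc n z hz0 (Or.inl hzn) hg hd hdist hmid
  refine ⟨hlow.1, ?_⟩
  intro hn i hi
  have hres := hlow.2 hn i hi
  by_cases hiL : i = Lc x y e hx hc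
  · left
    simp only [if_pos hiL]
    have hin : i = n := by omega
    rw [hin]
    exact hzn
  · simpa only [if_neg hiL] using hres

end Core

/-- coordinate swap, an orientation-reversing unimodular map -/
def rho (a : ℤ × ℤ) : ℤ × ℤ := (a.2, a.1)

lemma rho_rho (a : ℤ × ℤ) : rho (rho a) = a := rfl

lemma rho_injective : Function.Injective rho := fun a b h => by
  rw [← rho_rho a, h, rho_rho]

lemma det_rho (a b : ℤ × ℤ) : det (rho a) (rho b) = - det a b := by
  simp only [det, rho]; ring

lemma rho_neg (a : ℤ × ℤ) : rho (-a) = - rho a := rfl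

lemma gcd_rho (a : ℤ × ℤ) : Int.gcd (rho a).1 (rho a).2 = Int.gcd a.1 a.2 :=
  Int.gcd_comm _ _

lemma transport (x y : ℤ × ℤ) (ε : ℚ) (n : ℕ) (z : ℕ → ℤ × ℤ)
    (h : IsConsistentPath x y ε n z) :
    IsConsistentPath (rho x) (rho y) ε n (fun i => rho (z i)) := by
  obtain ⟨⟨h0, hN, hg, hd, hdist⟩, hcons⟩ := h
  refine ⟨⟨congrArg rho h0, congrArg rho hN, ?_, ?_, ?_⟩, ?_⟩
  · intro i hi
    rw [gcd_rho]
    exact hg i hi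
  · intro i hi
    rw [det_rho, abs_neg]
    exact hd i hi
  · intro i j hi hj hij
    obtain ⟨d1, d2⟩ := hdist i j hi hj hij
    constructor
    · exact fun hcon => d1 (rho_injective hcon)
    · intro hcon
      apply d2
      apply rho_injective
      rw [rho_neg]
      exact hcon
  · intro i h1 h2
    obtain ⟨α, β, he1, he2, hsig⟩ := hcons i h1 h2
    exact ⟨α, β, he2, he1, hsig⟩

lemma frame (x y : ℤ × ℤ) (hx : Int.gcd x.1 x.2 = 1) (hy : Int.gcd y.1 y.2 = 1)
    (hdet : 2 ≤ |det x y|) (e : ℤ) (he : e = 1 ∨ e = -1) :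
    ∃ (L : ℕ) (T : ℕ → ℤ × ℤ), 2 ≤ L ∧ IsConsistentPath x y (e:ℚ) L T ∧
      ∀ n z, IsConsistentPath x y (e:ℚ) n z →
        (L ≤ n ∧ (n = L → ∀ i, i ≤ n → z i = T i ∨ z i = - T i)) := by
  by_cases hpos : 0 < e * det x y
  · have hc : 2 ≤ e * det x y := by
      rcases he with rfl | rfl <;> rcases abs_cases (det x y) with ⟨ha1, ha2⟩ | ⟨ha1, ha2⟩ <;>
        omega
    exact core_main x y e hx hy he hc
  · have hc' : 2 ≤ e * det (rho x) (rho y) := by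
      rw [det_rho]
      rcases he with rfl | rfl <;> rcases abs_cases (det x y) with ⟨ha1, ha2⟩ | ⟨ha1, ha2⟩ <;>
        omega
    have hx' : Int.gcd (rho x).1 (rho x).2 = 1 := by rw [gcd_rho]; exact hx
    have hy' : Int.gcd (rho y).1 (rho y).2 = 1 := by rw [gcd_rho]; exact hy
    obtain ⟨L, T, hL2, hT, hmin⟩ := core_main (rho x) (rho y) e hx' hy' he hc'
    refine ⟨L, fun i => rho (T i), hL2, ?_, ?_⟩
    · have htr := transport (rho x) (rho y) (e:ℚ) L T hT
      exact htr
    · intro n z hz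
      have hz' := transport x y (e:ℚ) n z hz
      obtain ⟨hle, hrig⟩ := hmin n _ hz'
      refine ⟨hle, fun hn i hi => ?_⟩
      rcases hrig hn i hi with h | h
      · left
        have h3 : rho (rho (z i)) = rho (T i) := congrArg rho h
        rw [rho_rho] at h3
        exact h3
      · right
        have h3 : rho (rho (z i)) = - rho (T i) := congrArg rho h
        rw [rho_rho] at h3
        exact h3

lemma coeff_unique (x y : ℤ × ℤ) (hD : det x y ≠ 0) (α β α' β' : ℚ)
    (h1 : α * x.1 + β * y.1 = α' * x.1 + β' * y.1)
    (h2 : α * x.2 + β * y.2 = α' * x.2 + β' * y.2) : α = α' ∧ β = β' := by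
  have hDQ : ((x.1 * y.2 - x.2 * y.1 : ℤ) : ℚ) ≠ 0 := by
    simp only [det] at hD
    exact_mod_cast hD
  push_cast at hDQ
  constructor
  · have key : (α - α') * ((x.1:ℚ) * y.2 - x.2 * y.1) = 0 := by
      linear_combination (y.2 : ℚ) * h1 - (y.1 : ℚ) * h2
    rcases mul_eq_zero.mp key with h | h
    · linarith
    · exact absurd h hDQ
  · have key : (β - β') * ((x.1:ℚ) * y.2 - x.2 * y.1) = 0 := by
      linear_combination (x.1 : ℚ) * h2 - (x.2 : ℚ) * h1
    rcases mul_eq_zero.mp key with h | h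
    · linarith
    · exact absurd h hDQ

end UC

set_option maxHeartbeats 1000000 in
/-- Theorem 1.3: let `dp` and `dm` denote the minimal lengths of consistent paths of
signs `+1` and `-1` from `x` to `y`. There is, up to replacing vertices by their
negatives, a unique shortest consistent path from `x` to `y` (i.e. any two consistent
paths, of either sign, of the minimal length `min dp dm` coincide up to sign) if and
only if `dp ≠ dm`. -/
theorem unique_shortest_consistent_path_iff (x y : ℤ × ℤ)
    (hx : Int.gcd x.1 x.2 = 1) (hy : Int.gcd y.1 y.2 = 1)
    (hdet : 2 ≤ |det x y|) (dp dm : ℕ)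
    (hdp1 : ∃ z, IsConsistentPath x y 1 dp z)
    (hdp2 : ∀ m z, IsConsistentPath x y 1 m z → dp ≤ m)
    (hdm1 : ∃ z, IsConsistentPath x y (-1) dm z)
    (hdm2 : ∀ m z, IsConsistentPath x y (-1) m z → dm ≤ m) :
    (∀ (ε ε' : ℚ) (n n' : ℕ) (z z' : ℕ → ℤ × ℤ),
        (ε = 1 ∨ ε = -1) → (ε' = 1 ∨ ε' = -1) →
        IsConsistentPath x y ε n z → IsConsistentPath x y ε' n' z' →
        n = min dp dm → n' = min dp dm →
        ∀ i ≤ n, z i = z' i ∨ z i = -z' i) ↔ dp ≠ dm := by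
  obtain ⟨Lp, Tp, hLp2, hTp, hminp⟩ := UC.frame x y hx hy hdet 1 (Or.inl rfl)
  obtain ⟨Lm, Tm, hLm2, hTm, hminm⟩ := UC.frame x y hx hy hdet (-1) (Or.inr rfl)
  have hcast1 : (((1:ℤ)):ℚ) = (1:ℚ) := by norm_num
  have hcastm : (((-1:ℤ)):ℚ) = (-1:ℚ) := by norm_num
  rw [hcast1] at hTp hminp
  rw [hcastm] at hTm hminm
  have hdpL : dp = Lp := by
    obtain ⟨zp, hzp⟩ := hdp1
    have h1 := hdp2 Lp Tp hTp
    have h2 := (hminp dp zp hzp).1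
    omega
  have hdmL : dm = Lm := by
    obtain ⟨zm, hzm⟩ := hdm1
    have h1 := hdm2 Lm Tm hTm
    have h2 := (hminm dm zm hzm).1
    omega
  have hDne : det x y ≠ 0 := by
    intro h; rw [h] at hdet; simp at hdet
  constructor
  · -- uniqueness implies dp ≠ dm
    intro huniq heq
    obtain ⟨zp, hzp⟩ := hdp1
    obtain ⟨zm, hzm⟩ := hdm1
    have h2dp : 2 ≤ dp := by omega
    have key := huniq 1 (-1) dp dm zp zm (Or.inl rfl) (Or.inr rfl) hzp hzm
      (by omega) (by omega) 1 (by omega)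
    obtain ⟨α, β, hp1, hp2, hpsig⟩ := hzp.2 1 (by omega) (by omega)
    obtain ⟨α', β', hm1, hm2, hmsig⟩ := hzm.2 1 (by omega) (by omega : 1 < dm)
    rcases key with hk | hk
    · rw [hk] at hp1 hp2
      rw [hp1] at hm1
      rw [hp2] at hm2
      obtain ⟨hαα, hββ⟩ := UC.coeff_unique x y hDne α β α' β' hm1 hm2
      rw [hαα, hββ] at hpsig
      nlinarith
    · have hm1' : ((zm 1).1 : ℚ) = (-α) * x.1 + (-β) * y.1 := by
        have hneg : (zm 1) = - zp 1 := by
          rw [hk]; simp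
        rw [hneg]
        simp only [Prod.fst_neg]
        push_cast
        rw [hp1]
        ring
      have hm2' : ((zm 1).2 : ℚ) = (-α) * x.2 + (-β) * y.2 := by
        have hneg : (zm 1) = - zp 1 := by
          rw [hk]; simp
        rw [hneg]
        simp only [Prod.snd_neg]
        push_cast
        rw [hp2]
        ring
      rw [hm1'] at hm1
      rw [hm2'] at hm2
      obtain ⟨hαα, hββ⟩ := UC.coeff_unique x y hDne (-α) (-β) α' β' hm1 hm2
      rw [← hαα, ← hββ] at hmsig
      nlinarith
  · -- dp ≠ dm implies uniqueness
    intro hne ε ε' n n' z z' hε hε' hz hz' hn hn' i hi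
    have hn2 : n = n' := by omega
    -- each path pins down which of dp/dm is smaller
    have hsame : (ε = 1 ∧ ε' = 1 ∧ dp < dm) ∨ (ε = -1 ∧ ε' = -1 ∧ dm < dp) := by
      rcases hε with rfl | rfl <;> rcases hε' with rfl | rfl
      · left
        have h1 := hdp2 n z hz
        refine ⟨rfl, rfl, ?_⟩
        omega
      · exfalso
        have h1 := hdp2 n z hz
        have h2 := hdm2 n' z' hz'
        omega
      · exfalso
        have h1 := hdm2 n z hz
        have h2 := hdp2 n' z' hz'
        omega
      · right
        have h1 := hdm2 n z hz
        refine ⟨rfl, rfl, ?_⟩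
        omega
    rcases hsame with ⟨he1, he2, hlt⟩ | ⟨he1, he2, hlt⟩
    · subst he1; subst he2
      have hnp : n = Lp := by omega
      have ha := (hminp n z hz).2 hnp i hi
      have hb := (hminp n' z' hz').2 (by omega) i (by omega)
      rcases ha with h1 | h1 <;> rcases hb with h2 | h2
      · left; rw [h1, ← h2]
      · right; rw [h1, h2, neg_neg]
      · right; rw [h1, h2]
      · left; rw [h1, h2]
    · subst he1; subst he2
      have hnp : n = Lm := by omega
      have ha := (hminm n z hz).2 hnp i hi
      have hb := (hminm n' z' hz').2 (by omega) i (by omega)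
      rcases ha with h1 | h1 <;> rcases hb with h2 | h2
      · left; rw [h1, ← h2]
      · right; rw [h1, h2, neg_neg]
      · right; rw [h1, h2]
      · left; rw [h1, h2]
end

section
/- (Corollary 2, realization of prescribed consistent distances) Let x ∈ ℤ × ℤ be a unimodular pair and let dₐ, d_b be integers with dₐ ≥ 2 and d_b ≥ 2. Then there exists a unimodular pair y ∈ ℤ × ℤ with |det(x,y)| ≥ 2 such that the two minimal lengths d₊(x,y) and d₋(x,y) of consistent paths of signs +1 and −1 from x to y satisfy {d₊(x,y), d₋(x,y)} = {dₐ, d_b}. In particular the union of the two shortest consistent paths is a cycle through x of length dₐ + d_b. -/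
/-! Consistent distances are invariant under determinant-one linear maps, so we may take
`x = (1, 0)` and `y = (b, a b + 1)` with `a = dₐ - 1`, `b = d_b - 1`. The paths
`(1, 0), (1, 1), …, (1, a), y` and `(1, 0), (0, 1), (1, a + 1), …, (b, a b + 1)` are consistent
of signs `+1` and `-1`. They are shortest by a slope argument: normalise the vertices of a
path with determinants `±1` inside the open cone between `(1, 0)` and `(P, Q)` into the upper
half-plane; then the slope grows by at most `1` per step, so the length is at least `Q / P`.
Applied from `x` with `(P, Q) = (b, a b + 1)`, and to the reversed path from `y` with
`(P, Q) = (a, a b + 1)`, this gives `d₊ ≥ a + 1` and `d₋ ≥ b + 1`. -/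

theorem det_neg_left (u w : ℤ × ℤ) : det (-u) w = -det u w := by
  simp only [det, Prod.fst_neg, Prod.snd_neg]; ring

theorem det_neg_right (u w : ℤ × ℤ) : det u (-w) = -det u w := by
  simp only [det, Prod.fst_neg, Prod.snd_neg]; ring

theorem gcd_eq_one_iff_exists_det_eq_one (u : ℤ × ℤ) :
    Int.gcd u.1 u.2 = 1 ↔ ∃ w, det u w = 1 := by
  rw [← Int.isCoprime_iff_gcd_eq_one]
  constructor
  · rintro ⟨s, t, h⟩
    exact ⟨(-t, s), by simp only [det]; linarith⟩
  · rintro ⟨w, h⟩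
    exact ⟨w.2, -w.1, by simp only [det] at h; linarith⟩

theorem gcd_eq_one_of_abs_det_eq_one_s11 {u w : ℤ × ℤ} (h : |det u w| = 1) :
    Int.gcd u.1 u.2 = 1 ∧ Int.gcd w.1 w.2 = 1 := by
  simp only [gcd_eq_one_iff_exists_det_eq_one]
  rcases abs_eq (zero_le_one' ℤ) |>.1 h with h | h
  · exact ⟨⟨w, h⟩, ⟨-u, by simp only [det, Prod.fst_neg, Prod.snd_neg] at h ⊢; linarith⟩⟩
  · exact ⟨⟨-w, by simp only [det, Prod.fst_neg, Prod.snd_neg] at h ⊢; linarith⟩,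
      ⟨u, by simp only [det] at h ⊢; linarith⟩⟩

/-- Cramer's rule: the coefficients of `z` in the basis `x, y` are `det z y / det x y` and
`det x z / det x y`. -/
theorem exists_coeffs_iff_det {x y : ℤ × ℤ} (hxy : det x y ≠ 0) (z : ℤ × ℤ) (ε : ℚ) :
    (∃ α β : ℚ, (z.1 : ℚ) = α * x.1 + β * y.1 ∧ (z.2 : ℚ) = α * x.2 + β * y.2 ∧
      ε * (α * β) > 0) ↔ 0 < ε * ((det z y : ℚ) * det x z) := by
  have hD : (det x y : ℚ) ≠ 0 := by exact_mod_cast hxy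
  constructor
  · rintro ⟨α, β, h1, h2, hpos⟩
    have hzy : (det z y : ℚ) = α * det x y := by
      simp only [det]; push_cast; rw [h1, h2]; ring
    have hxz : (det x z : ℚ) = β * det x y := by
      simp only [det]; push_cast; rw [h1, h2]; ring
    rw [hzy, hxz, show ε * (α * det x y * (β * det x y)) = ε * (α * β) * (det x y : ℚ) ^ 2 by ring]
    exact mul_pos hpos (sq_pos_of_ne_zero hD)
  · intro h
    refine ⟨det z y / det x y, det x z / det x y, ?_, ?_, ?_⟩
    · field_simp; simp only [det]; push_cast; ring
    · field_simp; simp only [det]; push_cast; ring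
    · rw [show ε * (det z y / det x y * (det x z / det x y)) =
        ε * ((det z y : ℚ) * det x z) / (det x y : ℚ) ^ 2 by ring]
      exact div_pos h (sq_pos_of_ne_zero hD)

theorem isConsistentPath_iff_det {x y : ℤ × ℤ} (hxy : det x y ≠ 0) {ε : ℚ} {n : ℕ}
    {z : ℕ → ℤ × ℤ} :
    IsConsistentPath x y ε n z ↔
      IsPath x y n z ∧ ∀ i, 0 < i → i < n → 0 < ε * ((det (z i) y : ℚ) * det x (z i)) := by
  simp only [IsConsistentPath, exists_coeffs_iff_det hxy]

theorem isPath_of_snd_strictMono {n : ℕ} {z : ℕ → ℤ × ℤ} (hn : 0 < n)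
    (hdet : ∀ i < n, |det (z i) (z (i + 1))| = 1) (h0 : 0 ≤ (z 0).2)
    (hmono : ∀ i < n, (z i).2 < (z (i + 1)).2) : IsPath (z 0) (z n) n z := by
  have hsm : StrictMonoOn (fun i => (z i).2) (Set.Iic n) :=
    strictMonoOn_Iic_of_lt_succ fun i hi => by simpa using hmono i hi
  refine ⟨rfl, rfl, fun i hi => ?_, hdet, fun i j hi hj hij => ?_⟩
  · rcases Nat.lt_or_ge i n with hi' | hi'
    · exact (gcd_eq_one_of_abs_det_eq_one_s11 (hdet i hi')).1
    · obtain rfl : i = n := le_antisymm hi hi'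
      have := (gcd_eq_one_of_abs_det_eq_one_s11 (hdet (i - 1) (by omega))).2
      rwa [Nat.sub_add_cancel hn] at this
  · have hnonneg : ∀ k ≤ n, 0 ≤ (z k).2 := fun k hk =>
      h0.trans (hsm.monotoneOn (Set.mem_Iic.2 (Nat.zero_le n)) hk (Nat.zero_le k))
    rcases Nat.lt_or_gt_of_ne hij with hij | hij
    · have hlt := hsm hi hj hij
      have h0i := hnonneg i hi
      refine ⟨fun h => hlt.ne (congrArg Prod.snd h), fun h => ?_⟩
      have := congrArg Prod.snd h
      simp only [Prod.snd_neg] at this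
      linarith
    · have hlt := hsm hj hi hij
      have h0j := hnonneg j hj
      refine ⟨fun h => hlt.ne' (congrArg Prod.snd h), fun h => ?_⟩
      have := congrArg Prod.snd h
      simp only [Prod.snd_neg] at this
      linarith

section Symmetries

variable {x y : ℤ × ℤ} {ε : ℚ} {n : ℕ} {z : ℕ → ℤ × ℤ}

theorem IsPath.map (e : ℤ × ℤ ≃+ ℤ × ℤ) (he : ∀ u w, det (e u) (e w) = det u w)
    (h : IsPath x y n z) : IsPath (e x) (e y) n (e ∘ z) := by
  obtain ⟨h0, hn, hgcd, hdet, hdist⟩ := h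
  refine ⟨by simp [h0], by simp [hn], fun i hi => ?_, fun i hi => by simpa [he] using hdet i hi,
    fun i j hi hj hij => ?_⟩
  · obtain ⟨w, hw⟩ := (gcd_eq_one_iff_exists_det_eq_one _).1 (hgcd i hi)
    exact (gcd_eq_one_iff_exists_det_eq_one _).2 ⟨e w, by simp [he, hw]⟩
  · simpa only [Function.comp_apply, ← map_neg, ne_eq, e.injective.eq_iff]
      using hdist i j hi hj hij

theorem IsConsistentPath.map (e : ℤ × ℤ ≃+ ℤ × ℤ) (he : ∀ u w, det (e u) (e w) = det u w)
    (hxy : det x y ≠ 0) (h : IsConsistentPath x y ε n z) :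
    IsConsistentPath (e x) (e y) ε n (e ∘ z) := by
  rw [isConsistentPath_iff_det hxy] at h
  rw [isConsistentPath_iff_det (by rwa [he])]
  exact ⟨h.1.map e he, by simpa only [Function.comp_apply, he] using h.2⟩

theorem IsPath.reverse (h : IsPath x y n z) : IsPath y x n (fun i => z (n - i)) := by
  obtain ⟨h0, hn, hgcd, hdet, hdist⟩ := h
  refine ⟨by simpa using hn, by simpa using h0, fun i _ => hgcd _ (Nat.sub_le n i),
    fun i hi => ?_, fun i j hi hj hij => hdist _ _ (Nat.sub_le n i) (Nat.sub_le n j) (by omega)⟩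
  have h' := hdet (n - (i + 1)) (by omega)
  rw [show n - (i + 1) + 1 = n - i by omega] at h'
  rw [← h', ← abs_neg]
  simp only [det]
  ring_nf

theorem IsConsistentPath.reverse (h : IsConsistentPath x y ε n z) :
    IsConsistentPath y x ε n (fun i => z (n - i)) := by
  refine ⟨h.1.reverse, fun i hi hin => ?_⟩
  obtain ⟨α, β, h1, h2, hpos⟩ := h.2 (n - i) (by omega) (by omega)
  exact ⟨β, α, by rw [h1]; ring, by rw [h2]; ring, by rwa [mul_comm β]⟩

end Symmetries

/-- The consistent distance `d_ε(x, y)` is the least element. -/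
def consistentLengths (x y : ℤ × ℤ) (ε : ℚ) : Set ℕ :=
  {n | ∃ z, IsConsistentPath x y ε n z}

theorem consistentLengths_comm (x y : ℤ × ℤ) (ε : ℚ) :
    consistentLengths x y ε = consistentLengths y x ε := by
  have key : ∀ x y, consistentLengths x y ε ⊆ consistentLengths y x ε :=
    fun _ _ _ ⟨z, hz⟩ => ⟨_, hz.reverse⟩
  exact (key x y).antisymm (key y x)

theorem consistentLengths_map (e : ℤ × ℤ ≃+ ℤ × ℤ) (he : ∀ u w, det (e u) (e w) = det u w)
    {x y : ℤ × ℤ} (hxy : det x y ≠ 0) (ε : ℚ) :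
    consistentLengths (e x) (e y) ε = consistentLengths x y ε := by
  have he' : ∀ u w, det (e.symm u) (e.symm w) = det u w := fun u w => by
    rw [← he, e.apply_symm_apply, e.apply_symm_apply]
  refine Set.Subset.antisymm (fun n ⟨z, hz⟩ => ⟨e.symm ∘ z, ?_⟩)
    (fun n ⟨z, hz⟩ => ⟨e ∘ z, hz.map e he hxy⟩)
  simpa using hz.map e.symm he' (by rwa [he])

def basisEquiv (p q : ℤ × ℤ) (h : det p q = 1) : ℤ × ℤ ≃+ ℤ × ℤ where
  toFun u := u.1 • p + u.2 • q
  invFun u := (det u q, det p u)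
  left_inv u := by
    unfold det at h ⊢
    ext <;> simp only [Prod.fst_add, Prod.snd_add, Prod.smul_fst, Prod.smul_snd, smul_eq_mul]
    · linear_combination u.1 * h
    · linear_combination u.2 * h
  right_inv u := by
    unfold det at h ⊢
    ext <;> simp only [Prod.fst_add, Prod.snd_add, Prod.smul_fst, Prod.smul_snd, smul_eq_mul]
    · linear_combination u.1 * h
    · linear_combination u.2 * h
  map_add' u w := by
    simp only [Prod.fst_add, Prod.snd_add, add_smul]
    abel

theorem det_basisEquiv {p q : ℤ × ℤ} (h : det p q = 1) (u w : ℤ × ℤ) :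
    det (basisEquiv p q h u) (basisEquiv p q h w) = det u w := by
  unfold det at h ⊢
  simp only [basisEquiv, AddEquiv.coe_mk, Equiv.coe_fn_mk, Prod.fst_add, Prod.snd_add,
    Prod.smul_fst, Prod.smul_snd, smul_eq_mul]
  linear_combination (u.1 * w.2 - u.2 * w.1) * h

theorem basisEquiv_one_zero {p q : ℤ × ℤ} (h : det p q = 1) : basisEquiv p q h (1, 0) = p := by
  simp [basisEquiv]

/-- The slope `q / p` grows by at most `1 / (p p') ≤ 1` per step. -/
theorem snd_le_mul_fst_of_det_le_one {m : ℕ} {u : ℕ → ℤ × ℤ} (hpos : ∀ i ≤ m, 0 < (u i).1)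
    (h0 : (u 0).2 ≤ 0) (hstep : ∀ i < m, det (u i) (u (i + 1)) ≤ 1) :
    (u m).2 ≤ m * (u m).1 := by
  suffices ∀ i ≤ m, (u i).2 ≤ i * (u i).1 from this m le_rfl
  intro i
  induction i with
  | zero => intro _; simpa using h0
  | succ i ih =>
    intro hi
    have hp := hpos i (by omega)
    have hp' := hpos (i + 1) hi
    have hs := hstep i hi
    have ih := ih (by omega)
    unfold det at hs
    push_cast
    nlinarith [mul_le_mul_of_nonneg_right ih hp'.le, mul_pos hp hp']

theorem le_length_mul_of_fan {P Q : ℤ} (hP : 0 < P) (hQ : 0 < Q) {y : ℤ × ℤ} {m : ℕ}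
    {w : ℕ → ℤ × ℤ} (hw : IsPath (1, 0) y m w) (hy : y = (P, Q) ∨ y = -(P, Q))
    (hcone : ∀ i, 0 < i → i < m → 0 < (w i).2 * det (w i) (P, Q)) : Q ≤ m * P := by
  obtain ⟨h0, hm, -, hdet, -⟩ := hw
  set u : ℕ → ℤ × ℤ := fun i => if (w i).2 < 0 then -w i else w i with hu
  have hu_det : ∀ i j, |det (u i) (u j)| = |det (w i) (w j)| := fun i j => by
    simp only [hu]; split_ifs <;> simp [det_neg_left, det_neg_right]
  have hu_snd : ∀ i, 0 ≤ (u i).2 := fun i => by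
    simp only [hu]; split_ifs with h
    · simp only [Prod.snd_neg]; linarith
    · linarith
  have hu_cone : ∀ i, (u i).2 * det (u i) (P, Q) = (w i).2 * det (w i) (P, Q) := fun i => by
    simp only [hu]; split_ifs <;> simp [det_neg_left]
  have hu_m : u m = (P, Q) := by
    rcases hy with hy | hy <;> simp only [hu, hm, hy, Prod.snd_neg, neg_neg] <;> split_ifs <;>
      first | rfl | omega
  have hpos : ∀ i ≤ m, 0 < (u i).1 := fun i hi => by
    rcases Nat.eq_zero_or_pos i with rfl | hi0
    · simp [hu, h0]
    rcases hi.lt_or_eq with him | rfl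
    · have hc := (hu_cone i).symm ▸ hcone i hi0 him
      have h2 := hu_snd i
      simp only [det] at hc
      by_contra! h1
      nlinarith [mul_nonneg h2 (by nlinarith : 0 ≤ (u i).2 * P - (u i).1 * Q)]
    · simp [hu_m, hP]
  have key := snd_le_mul_fst_of_det_le_one hpos (by simp [hu, h0])
    fun i hi => (le_abs_self _).trans (by rw [hu_det, hdet i hi])
  rwa [hu_m] at key

section StandardPosition

variable {a b : ℕ}

theorem det_one_zero_ne_zero : det (1, 0) ((b : ℤ), (a : ℤ) * b + 1) ≠ 0 := by
  simp only [det]; ring_nf; positivity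

theorem exists_isConsistentPath_one (hb : 0 < b) :
    ∃ z, IsConsistentPath (1, 0) ((b : ℤ), (a : ℤ) * b + 1) 1 (a + 1) z := by
  let z : ℕ → ℤ × ℤ := fun i => if i ≤ a then (1, i) else (b, a * b + 1)
  have hpath : IsPath (z 0) (z (a + 1)) (a + 1) z := by
    refine isPath_of_snd_strictMono (Nat.succ_pos a) (fun i hi => ?_) (by simp [z])
      (fun i hi => ?_) <;> rcases Nat.lt_or_ge i a with h | h
    · simp [z, h.le, Nat.succ_le_of_lt h, det]
    · simp [z, show i = a by omega, det]
    · simp [z, h.le, Nat.succ_le_of_lt h]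
    · simp only [z, show i = a by omega, le_refl, if_true, if_false,
        show ¬ a + 1 ≤ a by omega]
      nlinarith
  refine ⟨z, (isConsistentPath_iff_det det_one_zero_ne_zero).2 ⟨by simpa [z] using hpath,
    fun i hi hia => ?_⟩⟩
  simp only [z, Nat.lt_succ_iff.1 hia, if_true, det, one_mul]
  push_cast
  have hi0 : (0 : ℚ) < i := by exact_mod_cast hi
  have hib : (i : ℚ) * b ≤ a * b := by gcongr; exact_mod_cast Nat.lt_succ_iff.1 hia
  nlinarith

theorem exists_isConsistentPath_neg_one (ha : 0 < a) :
    ∃ z, IsConsistentPath (1, 0) ((b : ℤ), (a : ℤ) * b + 1) (-1) (b + 1) z := by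
  let z : ℕ → ℤ × ℤ := fun j => if j = 0 then (1, 0) else (j - 1, (j - 1) * a + 1)
  have hpath : IsPath (z 0) (z (b + 1)) (b + 1) z := by
    refine isPath_of_snd_strictMono (Nat.succ_pos b) (fun j hj => ?_) (by simp [z])
      (fun j hj => ?_) <;> rcases Nat.eq_zero_or_pos j with rfl | hj0
    · simp [z, det]
    · simp only [z, hj0.ne', Nat.succ_ne_zero, if_false, det]
      push_cast
      ring_nf
      simp
    · simp [z]
    · simp only [z, hj0.ne', Nat.succ_ne_zero, if_false]
      push_cast
      have : (0 : ℤ) < a := by exact_mod_cast ha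
      linarith
  have hend : z (b + 1) = ((b : ℤ), (a : ℤ) * b + 1) := by
    simp only [z, Nat.succ_ne_zero, if_false]
    push_cast
    ext <;> simp only <;> ring
  refine ⟨z, (isConsistentPath_iff_det det_one_zero_ne_zero).2 ⟨by simpa [hend, z] using hpath,
    fun j hj hjb => ?_⟩⟩
  simp only [z, hj.ne', if_false, det]
  push_cast
  have hjb' : (j : ℚ) ≤ b := by exact_mod_cast Nat.lt_succ_iff.1 hjb
  have hj1 : (1 : ℚ) ≤ j := by exact_mod_cast hj
  have : (0 : ℚ) ≤ ((j : ℚ) - 1) * a := mul_nonneg (by linarith) (by positivity)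
  nlinarith

theorem isLeast_consistentLengths_one (hb : 0 < b) :
    IsLeast (consistentLengths (1, 0) ((b : ℤ), (a : ℤ) * b + 1) 1) (a + 1) := by
  refine ⟨exists_isConsistentPath_one hb, fun m ⟨z, hz⟩ => ?_⟩
  rw [isConsistentPath_iff_det det_one_zero_ne_zero] at hz
  have hfan := le_length_mul_of_fan (P := b) (Q := a * b + 1) (by positivity) (by positivity)
    hz.1 (Or.inl rfl) fun i hi him => by
      have h := hz.2 i hi him
      rw [one_mul, ← Int.cast_mul, Int.cast_pos] at h
      simp only [det] at h ⊢
      linarith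
  by_contra! h
  have : (m : ℤ) * b ≤ a * b := by gcongr; omega
  linarith

theorem isLeast_consistentLengths_neg_one (ha : 0 < a) :
    IsLeast (consistentLengths (1, 0) ((b : ℤ), (a : ℤ) * b + 1) (-1)) (b + 1) := by
  refine ⟨exists_isConsistentPath_neg_one ha, fun m hm => ?_⟩
  have hv : det ((b : ℤ), (a : ℤ) * b + 1) (-1, -a) = 1 := by simp only [det]; ring
  have hxy : det (1, 0) (-(a : ℤ), -((a : ℤ) * b + 1)) ≠ 0 := by
    have : (0 : ℤ) ≤ a * b := by positivity
    simp only [det]; intro h; linarith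
  -- reversed, the path starts at `y`; the basis `y, (-1, -a)` moves `y` to `(1, 0)`
  have key := consistentLengths_map (basisEquiv _ _ hv) (det_basisEquiv hv) hxy (-1)
  rw [basisEquiv_one_zero, show basisEquiv _ _ hv (-(a : ℤ), -((a : ℤ) * b + 1)) = (1, 0) by
    simp only [basisEquiv, AddEquiv.coe_mk, Equiv.coe_fn_mk]; ext <;> simp; ring] at key
  rw [consistentLengths_comm, key] at hm
  obtain ⟨z, hz⟩ := hm
  rw [isConsistentPath_iff_det hxy] at hz
  have hfan := le_length_mul_of_fan (P := a) (Q := a * b + 1) (by positivity) (by positivity)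
    hz.1 (Or.inr (by ext <;> simp)) fun i hi him => by
      have h := hz.2 i hi him
      rw [neg_one_mul, ← Int.cast_mul, ← Int.cast_neg, Int.cast_pos] at h
      simp only [det] at h ⊢
      linarith
  by_contra! h
  have : (m : ℤ) * a ≤ b * a := by gcongr; omega
  linarith

end StandardPosition

/-- Corollary 2 (realization of prescribed consistent distances): for every unimodular
pair `x` and all integers `da, db ≥ 2` there is a unimodular pair `y`, non-adjacent
to `x`, such that the minimal lengths of consistent paths of signs `+1` and `-1` from
`x` to `y` are exactly `da` and `db` (in some order); the union of the two shortest
consistent paths is then a cycle through `x` of length `da + db`. -/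
theorem realize_consistent_distances (x : ℤ × ℤ) (hx : Int.gcd x.1 x.2 = 1)
    (da db : ℕ) (hda : 2 ≤ da) (hdb : 2 ≤ db) :
    ∃ y : ℤ × ℤ, Int.gcd y.1 y.2 = 1 ∧ 2 ≤ |det x y| ∧
      ∃ dp dm : ℕ,
        (∃ z, IsConsistentPath x y 1 dp z) ∧
        (∀ m z, IsConsistentPath x y 1 m z → dp ≤ m) ∧
        (∃ z, IsConsistentPath x y (-1) dm z) ∧
        (∀ m z, IsConsistentPath x y (-1) m z → dm ≤ m) ∧
        ({dp, dm} : Set ℕ) = {da, db} := by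
  obtain ⟨a, rfl⟩ : ∃ a, da = a + 1 := ⟨da - 1, by omega⟩
  obtain ⟨b, rfl⟩ : ∃ b, db = b + 1 := ⟨db - 1, by omega⟩
  obtain ⟨v, hv⟩ := (gcd_eq_one_iff_exists_det_eq_one x).1 hx
  set e := basisEquiv x v hv
  have hex : e (1, 0) = x := basisEquiv_one_zero hv
  have hdet : det x (e (b, a * b + 1)) = a * b + 1 := by
    rw [← hex, det_basisEquiv]; simp [det]
  have hp := isLeast_consistentLengths_one (a := a) (b := b) (by omega)
  have hm := isLeast_consistentLengths_neg_one (a := a) (b := b) (by omega)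
  rw [← consistentLengths_map e (det_basisEquiv hv) det_one_zero_ne_zero, hex] at hp hm
  refine ⟨e (b, a * b + 1), ?_, ?_, a + 1, b + 1, hp.1, fun m z hz => hp.2 ⟨z, hz⟩,
    hm.1, fun m z hz => hm.2 ⟨z, hz⟩, rfl⟩
  · refine (gcd_eq_one_iff_exists_det_eq_one _).2 ⟨e (-1, -a), ?_⟩
    rw [det_basisEquiv]; simp only [det]; ring
  · rw [hdet, abs_of_pos (by positivity)]
    have : (1 : ℤ) ≤ a * b := by nlinarith
    linarith
end

section
/- (Matrix reduction formula (9)) For all integers a and b, the matrices E(a)·E(2)·E(2)·E(b) = −E(a−1)·E(−3)·E(b−1) and E(a)·E(−2)·E(−2)·E(b) = E(a+1)·E(3)·E(b+1) hold in the ring of 2×2 integer matrices. -/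
/-- The elementary matrix `E(a)` with rows `(a, 1)` and `(-1, 0)`. -/
def E (a : ℤ) : Matrix (Fin 2) (Fin 2) ℤ := !![a, 1; -1, 0]

/-- Matrix reduction formula (9): `E(a) E(±2)² E(b) = ∓ E(a ∓ 1) E(∓3) E(b ∓ 1)`. -/
theorem matrix_reduction_two (a b : ℤ) :
    E a * E 2 * E 2 * E b = -(E (a - 1) * E (-3) * E (b - 1)) ∧
    E a * E (-2) * E (-2) * E b = E (a + 1) * E 3 * E (b + 1) := by
  constructor <;> · ext i j; fin_cases i <;> fin_cases j <;> simp [E, Matrix.mul_apply, Fin.sum_univ_two] <;> ring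
end
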